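/- arXiv:1501.02596 — 10 statements merged into one kernel-verified Lean document; each statement's English description precedes it below -/
import Mathlib

section
/- Let X be a real normed linear space of finite dimension n ≥ 2. For every subset D of the closed unit ball of X and every point y in the convex hull of D, the distance from y to D is at most 2(n−1)/n. Equivalently, the CHD-constant ζ_X = sup_{D ⊆ B₁(o)} sup_{y ∈ co D} dist(y, D) satisfies ζ_X ≤ 2(n−1)/n. -/
/-!
Carathéodory writes `y` as a convex combination of at most `n + 1` points `zᵢ` of `D`. If there
are `n + 1` of them they are linearly dependent, and moving the weights along a linear relation
whose coefficients sum to a nonpositive number kills one weight without increasing the total: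
then `y = ∑ vᵢ zᵢ` with at most `n` nonzero weights summing to `c ≤ 1`, i.e. `y` is a convex
combination of at most `n` points of `D` and the origin. Taking `j` with the largest weight,
`vⱼ ≥ c / n`, and `‖y - zⱼ‖ ≤ (c - vⱼ) + (1 - vⱼ) ≤ 1 + c (1 - 2 / n) ≤ 2 (n - 1) / n`.
-/

open Finset Metric

section Reduction

variable {𝕜 E ι : Type*} [Field 𝕜] [LinearOrder 𝕜] [IsStrictOrderedRing 𝕜]
  [AddCommGroup E] [Module 𝕜 E] [Fintype ι]

theorem exists_sum_smul_eq_of_relation {z : ι → E} {w a : ι → 𝕜} (hw : ∀ i, 0 ≤ w i)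
    (ha : ∑ i, a i • z i = 0) (ha_sum : ∑ i, a i ≤ 0) (ha_ne : ∃ i, a i ≠ 0) :
    ∃ v : ι → 𝕜, ∃ k, (∀ i, 0 ≤ v i) ∧ v k = 0 ∧ ∑ i, v i ≤ ∑ i, w i ∧
      ∑ i, v i • z i = ∑ i, w i • z i := by
  classical
  obtain ⟨i, hai⟩ : ∃ i, a i < 0 := by
    by_contra! h
    obtain ⟨i, hai⟩ := ha_ne
    exact hai ((sum_eq_zero_iff_of_nonneg fun j _ => h j).1
      (le_antisymm ha_sum (sum_nonneg fun j _ => h j)) i (mem_univ i))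
  obtain ⟨k, hk, hk_min⟩ := (univ.filter fun i => a i < 0).exists_min_image
    (fun i => w i / -a i) ⟨i, mem_filter.2 ⟨mem_univ i, hai⟩⟩
  have hak : a k < 0 := (mem_filter.1 hk).2
  -- the largest step `t` along `a` keeping every weight `w i + t * a i` nonnegative
  set t := w k / -a k
  have ht : 0 ≤ t := div_nonneg (hw k) (by linarith)
  refine ⟨fun i => w i + t * a i, k, fun i => ?_, ?_, ?_, ?_⟩
  · rcases le_or_gt 0 (a i) with hai | hai
    · exact add_nonneg (hw i) (mul_nonneg ht hai)
    · have := hk_min i (mem_filter.2 ⟨mem_univ i, hai⟩)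
      rw [le_div_iff₀ (by linarith)] at this
      linarith
  · simp only [t]
    field_simp [hak.ne]
    ring
  · rw [sum_add_distrib, ← mul_sum]
    linarith [mul_nonpos_of_nonneg_of_nonpos ht ha_sum]
  · simp only [add_smul, sum_add_distrib, mul_smul, ← smul_sum, ha, smul_zero, add_zero]

theorem exists_sum_smul_eq_of_not_linearIndependent {z : ι → E} (hz : ¬LinearIndependent 𝕜 z)
    {w : ι → 𝕜} (hw : ∀ i, 0 ≤ w i) :
    ∃ v : ι → 𝕜, ∃ k, (∀ i, 0 ≤ v i) ∧ v k = 0 ∧ ∑ i, v i ≤ ∑ i, w i ∧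
      ∑ i, v i • z i = ∑ i, w i • z i := by
  obtain ⟨a, ha, i, hai⟩ := Fintype.not_linearIndependent_iff.1 hz
  rcases le_total (∑ i, a i) 0 with ha_sum | ha_sum
  · exact exists_sum_smul_eq_of_relation hw ha ha_sum ⟨i, hai⟩
  · refine exists_sum_smul_eq_of_relation hw (a := -a) ?_ ?_ ⟨i, neg_ne_zero.2 hai⟩
    · simp only [Pi.neg_apply, neg_smul, sum_neg_distrib, ha, neg_zero]
    · simpa only [Pi.neg_apply, sum_neg_distrib, neg_nonpos] using ha_sum

theorem exists_sum_smul_eq_of_affineIndependent [FiniteDimensional 𝕜 E] [Nontrivial E]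
    {z : ι → E} (hz : AffineIndependent 𝕜 z) {w : ι → 𝕜} (hw : ∀ i, 0 ≤ w i)
    (hw_sum : ∑ i, w i = 1) :
    ∃ (s : Finset ι) (v : ι → 𝕜), s.Nonempty ∧ #s ≤ Module.finrank 𝕜 E ∧ (∀ i, 0 ≤ v i) ∧
      ∑ i ∈ s, v i ≤ 1 ∧ ∑ i ∈ s, v i • z i = ∑ i, w i • z i := by
  classical
  have hcard : Fintype.card ι ≤ Module.finrank 𝕜 E + 1 := by
    grw [hz.card_le_finrank_succ, Submodule.finrank_le]
  rcases hcard.lt_or_eq with hlt | heq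
  · exact ⟨univ, w, nonempty_of_sum_ne_zero (hw_sum ▸ one_ne_zero), Nat.lt_succ_iff.1 hlt, hw,
      hw_sum.le, rfl⟩
  · have hz_dep : ¬LinearIndependent 𝕜 z := fun h => by
      have := h.fintype_card_le_finrank
      omega
    obtain ⟨v, k, hv, hvk, hv_sum, hv_eq⟩ := exists_sum_smul_eq_of_not_linearIndependent hz_dep hw
    have hs_card : #(univ.erase k) = Module.finrank 𝕜 E := by simp [card_erase_of_mem, heq]
    refine ⟨univ.erase k, v, card_pos.1 ?_, hs_card.le, hv, ?_, ?_⟩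
    · rw [hs_card]
      exact Module.finrank_pos
    · rw [sum_erase _ hvk]
      exact hv_sum.trans hw_sum.le
    · rw [sum_erase _ (by simp [hvk]), hv_eq]

end Reduction

section Pigeonhole

variable {E ι : Type*} [SeminormedAddCommGroup E] [NormedSpace ℝ E] {s : Finset ι} {z : ι → E}
  {w : ι → ℝ}

theorem norm_sum_smul_sub_le (hz : ∀ i ∈ s, ‖z i‖ ≤ 1) (hw : ∀ i ∈ s, 0 ≤ w i) {j : ι}
    (hj : j ∈ s) (hwj : w j ≤ 1) :
    ‖∑ i ∈ s, w i • z i - z j‖ ≤ 1 + ∑ i ∈ s, w i - 2 * w j := by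
  classical
  have hrest : ‖∑ i ∈ s.erase j, w i • z i‖ ≤ ∑ i ∈ s, w i - w j :=
    calc ‖∑ i ∈ s.erase j, w i • z i‖ ≤ ∑ i ∈ s.erase j, ‖w i • z i‖ := norm_sum_le _ _
      _ ≤ ∑ i ∈ s.erase j, w i := sum_le_sum fun i hi => by
        have hi := mem_of_mem_erase hi
        rw [norm_smul, Real.norm_of_nonneg (hw i hi)]
        exact mul_le_of_le_one_right (hw i hi) (hz i hi)
      _ = ∑ i ∈ s, w i - w j := sum_erase_eq_sub hj
  calc ‖∑ i ∈ s, w i • z i - z j‖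
      = ‖∑ i ∈ s.erase j, w i • z i - (1 - w j) • z j‖ := by
        rw [← add_sum_erase s _ hj, sub_smul, one_smul]
        abel_nf
    _ ≤ ‖∑ i ∈ s.erase j, w i • z i‖ + (1 - w j) * ‖z j‖ := by
        grw [norm_sub_le, norm_smul, Real.norm_of_nonneg (sub_nonneg.2 hwj)]
    _ ≤ (∑ i ∈ s, w i - w j) + (1 - w j) * 1 := by
        gcongr
        exact hz j hj
    _ = 1 + ∑ i ∈ s, w i - 2 * w j := by ring

theorem exists_norm_sum_smul_sub_le (hs : s.Nonempty) {n : ℕ} (hn : 2 ≤ n) (hcard : #s ≤ n)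
    (hz : ∀ i ∈ s, ‖z i‖ ≤ 1) (hw : ∀ i ∈ s, 0 ≤ w i) (hw_sum : ∑ i ∈ s, w i ≤ 1) :
    ∃ j ∈ s, ‖∑ i ∈ s, w i • z i - z j‖ ≤ 2 * (n - 1) / n := by
  have hn' : (2 : ℝ) ≤ n := by exact_mod_cast hn
  set c := ∑ i ∈ s, w i
  have hc : 0 ≤ c := sum_nonneg hw
  obtain ⟨j, hj, hwj⟩ : ∃ j ∈ s, c / n ≤ w j := by
    refine exists_le_of_sum_le hs ?_
    rw [sum_const, nsmul_eq_mul]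
    calc (#s : ℝ) * (c / n) ≤ n * (c / n) := by gcongr
      _ = c := by field_simp
  have hwj_le : w j ≤ 1 := (single_le_sum hw hj).trans hw_sum
  refine ⟨j, hj, (norm_sum_smul_sub_le hz hw hj hwj_le).trans ?_⟩
  rw [div_le_iff₀ (by positivity)] at hwj
  rw [le_div_iff₀ (by positivity)]
  nlinarith

end Pigeonhole

theorem stmt_1 {X : Type*} [NormedAddCommGroup X] [NormedSpace ℝ X]
    [FiniteDimensional ℝ X] (n : ℕ) (hn : 2 ≤ n) (hdim : Module.finrank ℝ X = n)
    (D : Set X) (hD : D ⊆ Metric.closedBall 0 1)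
    (y : X) (hy : y ∈ convexHull ℝ D) :
    Metric.infDist y D ≤ 2 * (n - 1) / n := by
  obtain ⟨ι, _, z, w, hzD, hz_ind, hw, hw_sum, rfl⟩ := eq_pos_convex_span_of_mem_convexHull hy
  have hzD' : ∀ i, z i ∈ D := fun i => hzD (Set.mem_range_self i)
  have : Nontrivial X := Module.nontrivial_of_finrank_pos (R := ℝ) (by omega)
  obtain ⟨s, v, hs, hs_card, hv, hv_sum, hv_eq⟩ :=
    exists_sum_smul_eq_of_affineIndependent hz_ind (fun i => (hw i).le) hw_sum
  obtain ⟨j, -, hj⟩ := exists_norm_sum_smul_sub_le hs hn (hdim ▸ hs_card)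
    (fun i _ => mem_closedBall_zero_iff.1 (hD (hzD' i))) (fun i _ => hv i) hv_sum
  rw [hv_eq, ← dist_eq_norm] at hj
  exact (infDist_le_dist_of_mem (hzD' j)).trans hj
end

section
/- In ℓ₁ⁿ (ℝⁿ with the ℓ¹-norm), let e₁,…,eₙ be the standard basis vectors and b = (1/n)(e₁ + ⋯ + eₙ). Then b lies in the convex hull of {e₁,…,eₙ}, each eᵢ has ℓ¹-norm 1, and ‖b − eᵢ‖₁ = 2(n−1)/n for every i. Consequently the CHD-constant of ℓ₁ⁿ is at least 2(n−1)/n. -/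
/-! The barycentre `b` of the unit vectors lies in their convex hull, and in `ℓ₁ⁿ` its distance to
each `eᵢ` is `(1 - 1/n) + (n - 1) · 1/n`. So `D = {e₁, …, eₙ}` and `y = b` witness the bound on
the CHD-constant. -/

open Finset

theorem inv_card_smul_sum_mem_convexHull {𝕜 ι E : Type*} [Field 𝕜] [LinearOrder 𝕜]
    [IsStrictOrderedRing 𝕜] [Fintype ι] [Nonempty ι] [AddCommGroup E] [Module 𝕜 E]
    (v : ι → E) : (Fintype.card ι : 𝕜)⁻¹ • ∑ i, v i ∈ convexHull 𝕜 (Set.range v) := by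
  rw [smul_sum]
  refine (convex_convexHull 𝕜 _).sum_mem (fun _ _ => by positivity) ?_
    (fun i _ => subset_convexHull 𝕜 _ (Set.mem_range_self i))
  simp [Fintype.card_ne_zero]

namespace PiLp

variable {ι : Type*} [Fintype ι] [DecidableEq ι]

theorem sum_single_one : ∑ i, single 1 i (1 : ℝ) = WithLp.toLp 1 (fun _ : ι => (1 : ℝ)) := by
  simp_rw [← toLp_single, ← WithLp.toLp_sum, univ_sum_single]

theorem norm_const_sub_single_L1 (c a : ℝ) (i : ι) :
    ‖WithLp.toLp 1 (fun _ : ι => c) - single 1 i a‖ = |c - a| + (Fintype.card ι - 1) * |c| := by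
  rw [norm_eq_of_L1, Fintype.sum_eq_add_sum_compl i]
  have h_off_i : ∀ j ∈ ({i}ᶜ : Finset ι),
      ‖(WithLp.toLp 1 (fun _ : ι => c) - single 1 i a : PiLp 1 fun _ : ι => ℝ) j‖ = |c| := by
    intro j hj
    simp [show j ≠ i by simpa using hj]
  rw [sum_congr rfl h_off_i, sum_const, card_compl, card_singleton, nsmul_eq_mul,
    Nat.cast_sub (Fintype.card_pos_iff.mpr ⟨i⟩)]
  simp

end PiLp

theorem stmt_2 (n : ℕ) (hn : 0 < n)
    (e : Fin n → PiLp 1 fun _ : Fin n => ℝ)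
    (he : ∀ i, e i = (WithLp.equiv 1 (Fin n → ℝ)).symm (Pi.single i 1))
    (b : PiLp 1 fun _ : Fin n => ℝ) (hb : b = (n : ℝ)⁻¹ • ∑ i, e i) :
    b ∈ convexHull ℝ (Set.range e) ∧
    (∀ i, ‖e i‖ = 1) ∧
    (∀ i, ‖b - e i‖ = 2 * (n - 1) / n) ∧
    ∃ D ⊆ Metric.closedBall (0 : PiLp 1 fun _ : Fin n => ℝ) 1,
      ∃ y ∈ convexHull ℝ D, 2 * ((n : ℝ) - 1) / n ≤ Metric.infDist y D := by
  have : NeZero n := ⟨hn.ne'⟩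
  have he_single : e = fun i => PiLp.single 1 i 1 := funext he
  have hb_const : b = WithLp.toLp 1 (fun _ => (n : ℝ)⁻¹) := by
    rw [hb, he_single, PiLp.sum_single_one]
    ext; simp
  have hmem : b ∈ convexHull ℝ (Set.range e) := by
    simpa [hb] using inv_card_smul_sum_mem_convexHull (𝕜 := ℝ) e
  have hnorm (i : Fin n) : ‖e i‖ = 1 := by simp [he_single, PiLp.norm_single]
  have hdist (i : Fin n) : ‖b - e i‖ = 2 * (n - 1) / n := by
    have hn_one : (1 : ℝ) ≤ n := by exact_mod_cast hn
    rw [hb_const, he_single, PiLp.norm_const_sub_single_L1, Fintype.card_fin, abs_sub_comm,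
      abs_of_nonneg (sub_nonneg.mpr (inv_le_one_of_one_le₀ hn_one)), abs_inv, Nat.abs_cast]
    field_simp
    ring
  refine ⟨hmem, hnorm, hdist, Set.range e, ?_, b, hmem, ?_⟩
  · rintro _ ⟨i, rfl⟩
    simp [hnorm]
  · rw [Metric.le_infDist (Set.range_nonempty e)]
    rintro _ ⟨i, rfl⟩
    rw [dist_eq_norm, hdist]
end

section
/- In a real Hilbert space H, for every subset D of the closed unit ball and every point y in the convex hull of D, the distance from y to D is at most 1; that is, the CHD-constant of H equals 1. -/
/-!
For a convex combination `y = ∑ wᵢ zᵢ` (weights summing to one), the parallel axis theorem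
`∑ wᵢ ‖y - zᵢ‖² = ∑ wᵢ ‖zᵢ - c‖² - ‖y - c‖²` holds for every centre `c`. If all `zᵢ` lie in the
ball of radius `r` about `c`, the weighted mean of the `‖y - zᵢ‖²` is therefore at most `r²`, so
some `zᵢ ∈ D` is within distance `r` of `y`.
-/

open Finset

theorem Finset.exists_le_sum_mul_of_sum_eq_one {𝕜 ι : Type*} [Field 𝕜] [LinearOrder 𝕜]
    [IsStrictOrderedRing 𝕜] {t : Finset ι} {w : ι → 𝕜} (hw₀ : ∀ i ∈ t, 0 ≤ w i)
    (hw₁ : ∑ i ∈ t, w i = 1) (a : ι → 𝕜) :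
    ∃ i ∈ t, a i ≤ ∑ j ∈ t, w j * a j := by
  simpa [centerMass_eq_of_sum_1 _ _ hw₁] using
    (concaveOn_id (𝕜 := 𝕜) convex_univ).exists_le_of_centerMass hw₀ (by simp [hw₁])
      (p := a) fun _ _ => Set.mem_univ _

section InnerProductSpace

variable {E ι : Type*} [NormedAddCommGroup E] [InnerProductSpace ℝ E]
  {t : Finset ι} {w : ι → ℝ} {z : ι → E}

theorem Finset.sum_mul_norm_centerMass_sub_sq (hw₁ : ∑ i ∈ t, w i = 1) (c : E) :
    ∑ i ∈ t, w i * ‖t.centerMass w z - z i‖ ^ 2 =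
      ∑ i ∈ t, w i * ‖z i - c‖ ^ 2 - ‖t.centerMass w z - c‖ ^ 2 := by
  set y := t.centerMass w z
  have hy : ∑ i ∈ t, w i • (z i - c) = y - c := by
    simp only [smul_sub, sum_sub_distrib, ← sum_smul, hw₁, one_smul, y,
      centerMass_eq_of_sum_1 _ _ hw₁]
  have hinner : ∑ i ∈ t, w i * inner ℝ (z i - c) (y - c) = ‖y - c‖ ^ 2 := by
    simp only [← real_inner_smul_left, ← sum_inner, hy, real_inner_self_eq_norm_sq]
  have hexpand (i : ι) :
      ‖y - z i‖ ^ 2 = ‖z i - c‖ ^ 2 - 2 * inner ℝ (z i - c) (y - c) + ‖y - c‖ ^ 2 := by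
    rw [← norm_sub_sq_real, sub_sub_sub_cancel_right, norm_sub_rev]
  calc ∑ i ∈ t, w i * ‖y - z i‖ ^ 2
      = ∑ i ∈ t, w i * ‖z i - c‖ ^ 2 - 2 * ∑ i ∈ t, w i * inner ℝ (z i - c) (y - c)
          + (∑ i ∈ t, w i) * ‖y - c‖ ^ 2 := by
        simp only [hexpand, mul_add, mul_sub, sum_add_distrib, sum_sub_distrib, mul_sum, sum_mul]
        congr 2
        exact sum_congr rfl fun i _ => by ring
    _ = ∑ i ∈ t, w i * ‖z i - c‖ ^ 2 - ‖y - c‖ ^ 2 := by rw [hinner, hw₁]; ring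

theorem Finset.sum_mul_norm_centerMass_sub_sq_le (hw₀ : ∀ i ∈ t, 0 ≤ w i)
    (hw₁ : ∑ i ∈ t, w i = 1) {c : E} {r : ℝ} (hz : ∀ i ∈ t, z i ∈ Metric.closedBall c r) :
    ∑ i ∈ t, w i * ‖t.centerMass w z - z i‖ ^ 2 ≤ r ^ 2 - dist (t.centerMass w z) c ^ 2 := by
  rw [sum_mul_norm_centerMass_sub_sq hw₁ c, dist_eq_norm]
  gcongr
  calc ∑ i ∈ t, w i * ‖z i - c‖ ^ 2 ≤ ∑ i ∈ t, w i * r ^ 2 := by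
        refine sum_le_sum fun i hi => mul_le_mul_of_nonneg_left ?_ (hw₀ i hi)
        have hzi := hz i hi
        rw [Metric.mem_closedBall, dist_eq_norm] at hzi
        exact pow_le_pow_left₀ (norm_nonneg _) hzi 2
    _ = r ^ 2 := by rw [← sum_mul, hw₁, one_mul]

theorem Metric.infDist_sq_le_of_mem_convexHull {D : Set E} {c : E} {r : ℝ}
    (hD : D ⊆ Metric.closedBall c r) {y : E} (hy : y ∈ convexHull ℝ D) :
    Metric.infDist y D ^ 2 ≤ r ^ 2 - dist y c ^ 2 := by
  rw [_root_.convexHull_eq] at hy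
  obtain ⟨ι, t, w, z, hw₀, hw₁, hz, rfl⟩ := hy
  obtain ⟨i, hi, hle⟩ :=
    t.exists_le_sum_mul_of_sum_eq_one hw₀ hw₁ fun i => ‖t.centerMass w z - z i‖ ^ 2
  have hdist : Metric.infDist (t.centerMass w z) D ≤ ‖t.centerMass w z - z i‖ := by
    rw [← dist_eq_norm]
    exact Metric.infDist_le_dist_of_mem (hz i hi)
  calc Metric.infDist (t.centerMass w z) D ^ 2 ≤ ‖t.centerMass w z - z i‖ ^ 2 :=
        pow_le_pow_left₀ Metric.infDist_nonneg hdist 2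
    _ ≤ ∑ j ∈ t, w j * ‖t.centerMass w z - z j‖ ^ 2 := hle
    _ ≤ r ^ 2 - dist (t.centerMass w z) c ^ 2 :=
        sum_mul_norm_centerMass_sub_sq_le hw₀ hw₁ fun j hj => hD (hz j hj)

end InnerProductSpace

theorem stmt_5 {H : Type*} [NormedAddCommGroup H] [InnerProductSpace ℝ H]
    (D : Set H) (hD : D ⊆ Metric.closedBall 0 1)
    (y : H) (hy : y ∈ convexHull ℝ D) :
    Metric.infDist y D ≤ 1 := by
  have hsq := Metric.infDist_sq_le_of_mem_convexHull hD hy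
  nlinarith [Metric.infDist_nonneg (x := y) (s := D), sq_nonneg (dist y 0)]
end

section
/- Let X be a Banach space and let (Xₙ) be an increasing sequence of finite-dimensional subspaces Xₙ = span{x₁,…,xₙ} whose union is dense in X. Then the CHD-constant of X equals the limit of the CHD-constants of Xₙ: ζ_X = limₙ ζ_{Xₙ}, and moreover the sequence (ζ_{Xₙ}) is monotone nondecreasing. -/
/-!
The CHD-constant is monotone under linear isometric embeddings, so `chd Xₙ` is nondecreasing and
bounded by `chd X`. Conversely, a value `infDist y D` with `y = ∑ wᵢ zᵢ`, `zᵢ ∈ D`, is almost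
attained inside some `Xₙ`: replace each `zᵢ` by a point of `⋃ Xₙ` in the unit ball within `ε / 2`
(possible because `⋃ Xₙ` is dense and the closed ball is the closure of the open one), and `y` by
the same convex combination of the new points. Each distance moves by at most `ε / 2`, and finitely
many points already lie in a single `Xₙ`. Hence `chd X` is the supremum, and so the limit, of the
`chd Xₙ`.
-/

open Metric Set Filter

/-- The CHD-constant of a normed space. -/
noncomputable def chd (Y : Type*) [NormedAddCommGroup Y] [NormedSpace ℝ Y] : ℝ :=
  sSup {d : ℝ | ∃ D ⊆ Metric.closedBall (0 : Y) 1,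
    ∃ y ∈ convexHull ℝ D, d = Metric.infDist y D}

section CHD

variable {Y Z : Type*} [NormedAddCommGroup Y] [NormedSpace ℝ Y]
  [NormedAddCommGroup Z] [NormedSpace ℝ Z]

variable (Y) in
def chdSet : Set ℝ :=
  {d : ℝ | ∃ D ⊆ closedBall (0 : Y) 1, ∃ y ∈ convexHull ℝ D, d = infDist y D}

lemma zero_mem_chdSet : (0 : ℝ) ∈ chdSet Y :=
  ⟨{0}, by simp, 0, by simp [convexHull_singleton], by simp [infDist_singleton]⟩

lemma le_two_of_mem_chdSet {d : ℝ} (hd : d ∈ chdSet Y) : d ≤ 2 := by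
  obtain ⟨D, hD, y, hy, rfl⟩ := hd
  obtain ⟨z, hz⟩ : D.Nonempty := convexHull_nonempty_iff.1 ⟨y, hy⟩
  have hy1 : ‖y‖ ≤ 1 := mem_closedBall_zero_iff.1 (convexHull_min hD (convex_closedBall _ _) hy)
  have hz1 : ‖z‖ ≤ 1 := mem_closedBall_zero_iff.1 (hD hz)
  calc infDist y D ≤ dist y z := infDist_le_dist_of_mem hz
    _ ≤ ‖y‖ + ‖z‖ := dist_le_norm_add_norm y z
    _ ≤ 2 := by linarith

lemma bddAbove_chdSet : BddAbove (chdSet Y) := ⟨2, fun _ => le_two_of_mem_chdSet⟩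

lemma le_chd_of_mem_chdSet {d : ℝ} (hd : d ∈ chdSet Y) : d ≤ chd Y :=
  le_csSup bddAbove_chdSet hd

lemma LinearIsometry.mem_chdSet_iff (f : Y →ₗᵢ[ℝ] Z) {d : ℝ} :
    d ∈ chdSet Y ↔
      ∃ D ⊆ closedBall (0 : Z) 1 ∩ range f, ∃ y ∈ convexHull ℝ D, d = infDist y D := by
  have hball : ∀ D : Set Y, f '' D ⊆ closedBall 0 1 ↔ D ⊆ closedBall 0 1 := fun D => by
    simp [subset_def, f.norm_map]
  have hhull : ∀ D : Set Y, convexHull ℝ (f '' D) = f '' convexHull ℝ D :=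
    fun D => (f.toLinearMap.image_convexHull D).symm
  constructor
  · rintro ⟨D, hD, y, hy, rfl⟩
    refine ⟨f '' D, subset_inter ((hball D).2 hD) (image_subset_range _ _), f y, ?_, ?_⟩
    · rw [hhull]
      exact mem_image_of_mem f hy
    · exact (infDist_image f.isometry).symm
  · rintro ⟨D, hD, y, hy, rfl⟩
    have hDf : f '' (f ⁻¹' D) = D := image_preimage_eq_of_subset (hD.trans inter_subset_right)
    rw [← hDf] at hD hy ⊢
    rw [hhull] at hy
    obtain ⟨y, hy, rfl⟩ := hy
    exact ⟨f ⁻¹' D, (hball _).1 (hD.trans inter_subset_left), y, hy, infDist_image f.isometry⟩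

lemma LinearIsometry.chd_le (f : Y →ₗᵢ[ℝ] Z) : chd Y ≤ chd Z :=
  csSup_le ⟨0, zero_mem_chdSet⟩ fun _ hd =>
    let ⟨D, hD, y, hy, hd⟩ := f.mem_chdSet_iff.1 hd
    le_chd_of_mem_chdSet ⟨D, hD.trans inter_subset_left, y, hy, hd⟩

lemma Submodule.chd_mono {p q : Submodule ℝ Y} (h : p ≤ q) : chd p ≤ chd q :=
  LinearIsometry.chd_le ⟨Submodule.inclusion h, fun _ => rfl⟩

lemma Finset.dist_centerMass_le {ι : Type*} (t : Finset ι) {w : ι → ℝ} {z z' : ι → Y} {δ : ℝ}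
    (hw₀ : ∀ i ∈ t, 0 ≤ w i) (hw₁ : ∑ i ∈ t, w i = 1)
    (h : ∀ i ∈ t, dist (z i) (z' i) ≤ δ) :
    dist (t.centerMass w z) (t.centerMass w z') ≤ δ := by
  rw [Finset.centerMass_eq_of_sum_1 _ _ hw₁, Finset.centerMass_eq_of_sum_1 _ _ hw₁, dist_eq_norm,
    ← Finset.sum_sub_distrib]
  calc ‖∑ i ∈ t, (w i • z i - w i • z' i)‖ ≤ ∑ i ∈ t, w i * dist (z i) (z' i) := by
        refine norm_sum_le_of_le t fun i hi => ?_
        rw [← smul_sub, norm_smul, Real.norm_of_nonneg (hw₀ i hi), dist_eq_norm]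
    _ ≤ ∑ i ∈ t, w i * δ := Finset.sum_le_sum fun i hi => by gcongr; exacts [hw₀ i hi, h i hi]
    _ = δ := by rw [← Finset.sum_mul, hw₁, one_mul]

lemma Dense.exists_mem_closedBall_dist_lt {s : Set Y} (hs : Dense s) {x z : Y} {r δ : ℝ}
    (hr : r ≠ 0) (hz : z ∈ closedBall x r) (hδ : 0 < δ) :
    ∃ b ∈ s ∩ closedBall x r, dist z b < δ := by
  have hz' : z ∈ closure (ball x r ∩ s) := by
    rw [← closure_ball x hr] at hz
    exact closure_minimal (hs.open_subset_closure_inter isOpen_ball) isClosed_closure hz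
  obtain ⟨b, ⟨hbr, hbs⟩, hzb⟩ := Metric.mem_closure_iff.1 hz' δ hδ
  exact ⟨b, ⟨hbs, ball_subset_closedBall hbr⟩, hzb⟩

lemma Dense.exists_finset_infDist_le_add {s : Set Y} (hs : Dense s) {D : Set Y}
    (hD : D ⊆ closedBall 0 1) {y : Y} (hy : y ∈ convexHull ℝ D) {ε : ℝ} (hε : 0 < ε) :
    ∃ F : Finset Y, ↑F ⊆ s ∩ closedBall 0 1 ∧
      ∃ y' ∈ convexHull ℝ (F : Set Y), infDist y D ≤ infDist y' F + ε := by
  classical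
  rw [convexHull_eq] at hy
  obtain ⟨ι, t, w, z, hw₀, hw₁, hz, rfl⟩ := hy
  choose! z' hz's hz'd using fun i (hi : i ∈ t) =>
    hs.exists_mem_closedBall_dist_lt one_ne_zero (hD (hz i hi)) (half_pos hε)
  set y' := t.centerMass w z'
  have hFne : (t.image z' : Set Y).Nonempty := by
    rw [Finset.coe_nonempty, Finset.image_nonempty]
    exact Finset.nonempty_of_sum_ne_zero (by rw [hw₁]; exact one_ne_zero)
  have hyy' : dist (t.centerMass w z) y' ≤ ε / 2 :=
    t.dist_centerMass_le hw₀ hw₁ fun i hi => (hz'd i hi).le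
  have hy'F : infDist y' D - ε / 2 ≤ infDist y' (t.image z' : Set Y) := by
    refine (le_infDist hFne).2 fun p hp => ?_
    obtain ⟨i, hi, rfl⟩ := Finset.mem_image.1 hp
    have := (hz'd i hi).le
    calc infDist y' D - ε / 2 ≤ dist y' (z i) - dist (z' i) (z i) := by
          rw [dist_comm] at this; linarith [infDist_le_dist_of_mem (x := y') (hz i hi)]
      _ ≤ dist y' (z' i) := by linarith [dist_triangle y' (z' i) (z i)]
  refine ⟨t.image z', ?_, y', ?_, ?_⟩
  · simpa [subset_def] using hz's
  · exact t.centerMass_mem_convexHull hw₀ (by rw [hw₁]; exact one_pos)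
      fun i hi => Finset.mem_coe.2 (Finset.mem_image_of_mem z' hi)
  · linarith [infDist_le_infDist_add_dist (x := t.centerMass w z) (y := y') (s := D)]

theorem isLUB_chd_of_directed_of_dense {ι : Type*} [Nonempty ι] {V : ι → Submodule ℝ Y}
    (hV : Directed (· ≤ ·) V) (hdense : Dense (⋃ i, (V i : Set Y))) :
    IsLUB (range fun i => chd (V i)) (chd Y) := by
  refine ⟨?_, fun b hb => csSup_le ⟨0, zero_mem_chdSet⟩ ?_⟩
  · rintro _ ⟨i, rfl⟩
    exact (V i).subtypeₗᵢ.chd_le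
  rintro _ ⟨D, hD, y, hy, rfl⟩
  refine le_of_forall_pos_le_add fun ε hε => ?_
  obtain ⟨F, hF, y', hy', hle⟩ := hdense.exists_finset_infDist_le_add hD hy hε
  obtain ⟨i, hi⟩ := Directed.exists_mem_subset_of_finset_subset_biUnion
    (f := fun i => (V i : Set Y)) hV (hF.trans inter_subset_left)
  have hmem : infDist y' F ∈ chdSet (V i) := (V i).subtypeₗᵢ.mem_chdSet_iff.2
    ⟨F, subset_inter (hF.trans inter_subset_right) (by simpa using hi), y', hy', rfl⟩
  calc infDist y D ≤ infDist y' F + ε := hle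
    _ ≤ b + ε := by gcongr; exact (le_chd_of_mem_chdSet hmem).trans (hb ⟨i, rfl⟩)

end CHD

theorem stmt_8_general {X : Type*} [NormedAddCommGroup X] [NormedSpace ℝ X]
    (x : ℕ → X)
    (hdense : Dense (↑(Submodule.span ℝ (Set.range x)) : Set X)) :
    Monotone (fun n => chd (Submodule.span ℝ (x '' Set.Iio n))) ∧
    Filter.Tendsto (fun n => chd (Submodule.span ℝ (x '' Set.Iio n)))
      Filter.atTop (nhds (chd X)) := by
  set V : ℕ → Submodule ℝ X := fun n => Submodule.span ℝ (x '' Iio n)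
  have hV : Monotone V := fun m n h => Submodule.span_mono (image_mono (Iio_subset_Iio h))
  have hspan : Submodule.span ℝ (range x) ≤ ⨆ n, V n :=
    Submodule.span_le.2 <| range_subset_iff.2 fun j =>
      Submodule.mem_iSup_of_mem (j + 1) (Submodule.subset_span ⟨j, Nat.lt_succ_self j, rfl⟩)
  have hunion : Dense (⋃ n, (V n : Set X)) := by
    rw [← Submodule.coe_iSup_of_directed V hV.directed_le]
    exact hdense.mono hspan
  have hmono : Monotone fun n => chd (V n) := fun m n h => Submodule.chd_mono (hV h)
  exact ⟨hmono, tendsto_atTop_isLUB hmono (isLUB_chd_of_directed_of_dense hV.directed_le hunion)⟩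

theorem stmt_8 {X : Type*} [NormedAddCommGroup X] [NormedSpace ℝ X] [CompleteSpace X]
    (x : ℕ → X)
    (hdense : Dense (↑(Submodule.span ℝ (Set.range x)) : Set X)) :
    Monotone (fun n => chd (Submodule.span ℝ (x '' Set.Iio n))) ∧
    Filter.Tendsto (fun n => chd (Submodule.span ℝ (x '' Set.Iio n)))
      Filter.atTop (nhds (chd X)) :=
  stmt_8_general x hdense
end

section
/- For every p ∈ (1, ∞), the CHD-constant of L_p satisfies ζ_{L_p} ≤ 2^{|1/p − 1/p'|}, where 1/p + 1/p' = 1. That is, for any finite set of points x₁,…,x_k in the unit ball of L_p and any convex combination x₀ = Σ αᵢ xᵢ, there is some index i with ‖x₀ − xᵢ‖_p ≤ 2^{|1/p − 1/p'|}. -/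
open Real Set Finset MeasureTheory
open scoped ENNReal

/-!
Write `P = p.toReal`, `t i = x i ω` and `t̄ = ∑ a j * t j`. Everything rests on the pointwise bound
`∑ a i |t i - t̄| ^ P ≤ 2 ^ |P - 2| ∑ a i |t i| ^ P`, which integrates to
`∑ a i ‖x i - x₀‖ ^ P ≤ 2 ^ |P - 2|`; hence `‖x₀ - x i‖ ^ P ≤ 2 ^ |P - 2|` for some `i`, and
`|P - 2| / P = |1 / p - 1 / p'|`.

For `P ≥ 2` and `K = 2 ^ (P - 2)`: `|t - c| ^ P ≤ K |t| ^ P - P K |c| ^ (P - 2) c (t - c)`, whose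
linear term averages out at `c = t̄`. By homogeneity `c = 1`; for `t ≥ 1` and for `t ≤ 0` the
difference of the two sides is monotone, its derivative being nonnegative by superadditivity,
resp. midpoint convexity, of `y ↦ y ^ (P - 1)`.

For `P < 2` one dualises: with `g i = |t i - t̄| ^ (P - 2) (t i - t̄)` the left side equals
`∑ a i t i (g i - ḡ)`, and Hölder's inequality plus the case of the conjugate exponent, applied
to `g`, conclude.
-/

lemma nonneg_of_hasDerivAt_of_deriv_nonneg {f f' : ℝ → ℝ} (hf : ∀ x, HasDerivAt f (f' x) x)
    (hf' : ∀ x, 0 ≤ x → 0 ≤ f' x) (h₀ : 0 ≤ f 0) {x : ℝ} (hx : 0 ≤ x) : 0 ≤ f x := by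
  have hmono : MonotoneOn f (Ici 0) :=
    monotoneOn_of_hasDerivWithinAt_nonneg (convex_Ici 0)
      (fun y _ => (hf y).continuousAt.continuousWithinAt) (fun y _ => (hf y).hasDerivWithinAt)
      (fun y hy => hf' y (interior_subset hy))
  exact h₀.trans (hmono self_mem_Ici hx hx)

section PowerInequalities

variable {P : ℝ}

lemma rpow_add_mul_le_two_rpow_mul_one_add_rpow (hP : 2 ≤ P) {s : ℝ} (hs : 0 ≤ s) :
    s ^ P + P * 2 ^ (P - 2) * s ≤ 2 ^ (P - 2) * (1 + s) ^ P := by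
  set K : ℝ := 2 ^ (P - 2)
  have hK : 1 ≤ K := one_le_rpow (by norm_num) (by linarith)
  have hderiv : ∀ x, HasDerivAt (fun x => K * (1 + x) ^ P - x ^ P - P * K * x)
      (K * (1 * P * (1 + x) ^ (P - 1)) - P * x ^ (P - 1) - P * K * 1) x := fun x =>
    ((((hasDerivAt_id x).const_add 1).rpow_const (Or.inr (by linarith))).const_mul K
      |>.sub (hasDerivAt_rpow_const (Or.inr (by linarith)))).sub
      ((hasDerivAt_id x).const_mul (P * K))
  have hnonneg := nonneg_of_hasDerivAt_of_deriv_nonneg hderiv (fun x hx => by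
    have h := add_rpow_le_rpow_add zero_le_one hx (by linarith : 1 ≤ P - 1)
    rw [one_rpow] at h
    have hx' : 0 ≤ x ^ (P - 1) := rpow_nonneg hx _
    nlinarith [mul_le_mul_of_nonneg_left h (by positivity : 0 ≤ P * K),
      mul_nonneg (mul_nonneg (sub_nonneg.2 hK) (by linarith : 0 ≤ P)) hx'])
    (by simp [zero_rpow (by linarith : P ≠ 0)]; linarith) hs
  linarith

lemma one_add_rpow_le (hP : 2 ≤ P) {u : ℝ} (hu : 0 ≤ u) :
    (1 + u) ^ P ≤ 2 ^ (P - 2) * u ^ P + P * 2 ^ (P - 2) * (1 + u) := by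
  set K : ℝ := 2 ^ (P - 2)
  have hK : 1 ≤ K := one_le_rpow (by norm_num) (by linarith)
  have hderiv : ∀ x, HasDerivAt (fun x => K * x ^ P + P * K * (1 + x) - (1 + x) ^ P)
      (K * (P * x ^ (P - 1)) + P * K * 1 - 1 * P * (1 + x) ^ (P - 1)) x := fun x =>
    (((hasDerivAt_rpow_const (Or.inr (by linarith))).const_mul K).add
      (((hasDerivAt_id x).const_add 1).const_mul (P * K))).sub
      (((hasDerivAt_id x).const_add 1).rpow_const (Or.inr (by linarith)))
  have hnonneg := nonneg_of_hasDerivAt_of_deriv_nonneg hderiv (fun x hx => by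
    have h : (1 + x) ^ (P - 1) ≤ K * (1 + x ^ (P - 1)) := by
      lift x to NNReal using hx
      have := NNReal.rpow_add_le_mul_rpow_add_rpow 1 x (by linarith : 1 ≤ P - 1)
      rw [NNReal.one_rpow, show P - 1 - 1 = P - 2 by ring] at this
      exact_mod_cast this
    nlinarith [mul_le_mul_of_nonneg_left h (by linarith : 0 ≤ P)])
    (by simp [zero_rpow (by linarith : P ≠ 0)]; nlinarith) hu
  linarith

lemma abs_sub_one_rpow_add_le (hP : 2 ≤ P) (t : ℝ) :
    |t - 1| ^ P + P * 2 ^ (P - 2) * (t - 1) ≤ 2 ^ (P - 2) * |t| ^ P := by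
  have hK : 1 ≤ (2 : ℝ) ^ (P - 2) := one_le_rpow (by norm_num) (by linarith)
  rcases le_total t 0 with ht | ht
  · have h := one_add_rpow_le hP (neg_nonneg.2 ht)
    rw [abs_of_nonpos (by linarith), abs_of_nonpos ht, show -(t - 1) = 1 + -t by ring]
    linarith
  rcases le_total t 1 with ht₁ | ht₁
  · have h : (1 - t) ^ P ≤ 1 - t :=
      rpow_le_self_of_le_one (by linarith) (by linarith) (by linarith)
    rw [abs_of_nonpos (by linarith), abs_of_nonneg ht, neg_sub]
    nlinarith [mul_nonneg (by linarith : (0:ℝ) ≤ 2 ^ (P - 2)) (rpow_nonneg ht P),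
      mul_nonneg (sub_nonneg.2 ht₁) (by nlinarith : 0 ≤ P * 2 ^ (P - 2) - 1)]
  · have h := rpow_add_mul_le_two_rpow_mul_one_add_rpow hP (sub_nonneg.2 ht₁)
    rw [abs_of_nonneg (by linarith), abs_of_nonneg ht]
    rwa [add_sub_cancel] at h

lemma mul_abs_rpow_sub_two_mul_self (hP : P ≠ 0) (u : ℝ) :
    u * (|u| ^ (P - 2) * u) = |u| ^ P := by
  calc u * (|u| ^ (P - 2) * u) = |u| ^ (P - 2) * |u| ^ (2 : ℝ) := by
        rw [rpow_two, sq_abs]; ring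
    _ = |u| ^ P := by rw [← rpow_add' (abs_nonneg u) (by simpa)]; ring_nf

lemma abs_rpow_sub_two_mul_self (hP : P ≠ 1) (u : ℝ) :
    |(|u| ^ (P - 2) * u)| = |u| ^ (P - 1) := by
  rw [abs_mul, abs_of_nonneg (rpow_nonneg (abs_nonneg u) _),
    ← rpow_add_one' (abs_nonneg u) (by contrapose! hP; linarith)]
  ring_nf

lemma abs_sub_rpow_le (hP : 2 ≤ P) (c t : ℝ) :
    |t - c| ^ P ≤ 2 ^ (P - 2) * |t| ^ P - P * 2 ^ (P - 2) * (|c| ^ (P - 2) * c) * (t - c) := by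
  rcases eq_or_ne c 0 with rfl | hc
  · have hK : 1 ≤ (2 : ℝ) ^ (P - 2) := one_le_rpow (by norm_num) (by linarith)
    simpa using le_mul_of_one_le_left (rpow_nonneg (abs_nonneg t) P) hK
  have h := mul_le_mul_of_nonneg_left (abs_sub_one_rpow_add_le hP (t / c))
    (rpow_nonneg (abs_nonneg c) P)
  have hscale : ∀ y, |c| ^ P * |y| ^ P = |c * y| ^ P := fun y => by
    rw [abs_mul, mul_rpow (abs_nonneg c) (abs_nonneg y)]
  have hlin : |c| ^ P * (t / c - 1) = |c| ^ (P - 2) * c * (t - c) := by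
    rw [← mul_abs_rpow_sub_two_mul_self (by linarith) c]
    field_simp
  rw [mul_add, hscale, mul_sub, mul_one, mul_div_cancel₀ t hc, mul_left_comm _ (2 ^ (P - 2)),
    hscale, mul_div_cancel₀ t hc, mul_left_comm, hlin] at h
  nlinarith

end PowerInequalities

lemma Real.HolderConjugate.le_rpow_sub_one_mul_of_le {P Q S T C : ℝ} (hPQ : P.HolderConjugate Q)
    (hS : 0 ≤ S) (hT : 0 ≤ T) (hC : 0 ≤ C) (h : S ≤ T ^ (1 / P) * (C * S) ^ (1 / Q)) :
    S ≤ C ^ (P - 1) * T := by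
  rcases hS.eq_or_lt with rfl | hS
  · positivity
  have hP := hPQ.pos
  have hexp : (P - 1) * (1 / P) = 1 / Q := by
    rw [sub_mul, one_mul, mul_one_div_cancel hP.ne', one_div, one_div, hPQ.one_sub_inv]
  have h' : S ^ (1 / P) * S ^ (1 / Q) ≤ (C ^ (P - 1) * T) ^ (1 / P) * S ^ (1 / Q) :=
    calc S ^ (1 / P) * S ^ (1 / Q) = S := by
          rw [← rpow_add hS, hPQ.one_div_add_one_div, div_one, rpow_one]
      _ ≤ T ^ (1 / P) * (C * S) ^ (1 / Q) := h
      _ = (C ^ (P - 1) * T) ^ (1 / P) * S ^ (1 / Q) := by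
          rw [mul_rpow hC hS.le, mul_rpow (by positivity) hT, ← rpow_mul hC, hexp]; ring
  have := le_of_mul_le_mul_right h' (rpow_pos_of_pos hS _)
  rw [rpow_le_rpow_iff hS.le (by positivity) (by positivity)] at this
  linarith

section WeightedSums

variable {ι : Type*} [Fintype ι] {a : ι → ℝ} {P : ℝ}

lemma sum_mul_sub_sum_mul_eq_zero (hsum : ∑ i, a i = 1) (t : ι → ℝ) :
    ∑ i, a i * (t i - ∑ j, a j * t j) = 0 := by
  simp only [mul_sub, sum_sub_distrib, ← sum_mul, hsum, one_mul, sub_self]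

lemma sum_mul_abs_sub_rpow_le_of_two_le (hP : 2 ≤ P) (ha : ∀ i, 0 ≤ a i)
    (hsum : ∑ i, a i = 1) (t : ι → ℝ) :
    ∑ i, a i * |t i - ∑ j, a j * t j| ^ P ≤ 2 ^ (P - 2) * ∑ i, a i * |t i| ^ P := by
  set c := ∑ j, a j * t j
  set w := P * 2 ^ (P - 2) * (|c| ^ (P - 2) * c)
  calc ∑ i, a i * |t i - c| ^ P
      ≤ ∑ i, a i * (2 ^ (P - 2) * |t i| ^ P - w * (t i - c)) :=
        sum_le_sum fun i _ => mul_le_mul_of_nonneg_left (abs_sub_rpow_le hP c (t i)) (ha i)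
    _ = 2 ^ (P - 2) * ∑ i, a i * |t i| ^ P - w * ∑ i, a i * (t i - c) := by
        simp only [mul_sum, ← sum_sub_distrib]
        exact sum_congr rfl fun i _ => by ring
    _ = 2 ^ (P - 2) * ∑ i, a i * |t i| ^ P := by
        rw [sum_mul_sub_sum_mul_eq_zero hsum, mul_zero, sub_zero]

lemma sum_mul_mul_le_weighted_Lp_mul_Lq {p q : ℝ} (hpq : p.HolderConjugate q)
    (ha : ∀ i, 0 ≤ a i) (f g : ι → ℝ) :
    ∑ i, a i * (f i * g i)
      ≤ (∑ i, a i * |f i| ^ p) ^ (1 / p) * (∑ i, a i * |g i| ^ q) ^ (1 / q) := by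
  have hpow : ∀ {r : ℝ}, 0 < r → ∀ i (y : ℝ), |a i ^ (1 / r) * y| ^ r = a i * |y| ^ r :=
    fun hr i y => by
      rw [abs_mul, abs_of_nonneg (rpow_nonneg (ha i) _), mul_rpow (rpow_nonneg (ha i) _)
        (abs_nonneg y), ← rpow_mul (ha i), one_div_mul_cancel hr.ne', rpow_one]
  calc ∑ i, a i * (f i * g i) = ∑ i, (a i ^ (1 / p) * f i) * (a i ^ (1 / q) * g i) :=
        sum_congr rfl fun i _ => by
          rw [mul_mul_mul_comm, ← rpow_add' (ha i) (by rw [hpq.one_div_add_one_div]; norm_num),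
            hpq.one_div_add_one_div, div_one, rpow_one]
    _ ≤ _ := inner_le_Lp_mul_Lq _ _ _ hpq
    _ = _ := by simp only [hpow hpq.pos, hpow hpq.symm.pos]

lemma sum_mul_abs_sub_rpow_le_of_le_two (hP₁ : 1 < P) (hP₂ : P ≤ 2) (ha : ∀ i, 0 ≤ a i)
    (hsum : ∑ i, a i = 1) (t : ι → ℝ) :
    ∑ i, a i * |t i - ∑ j, a j * t j| ^ P ≤ 2 ^ (2 - P) * ∑ i, a i * |t i| ^ P := by
  set c := ∑ j, a j * t j
  set Q := P.conjExponent
  have hPQ : P.HolderConjugate Q := .conjExponent hP₁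
  have hQ : 2 ≤ Q := by
    rw [hPQ.conjugate_eq, le_div_iff₀ (by linarith)]; linarith
  set g : ι → ℝ := fun i => |t i - c| ^ (P - 2) * (t i - c)
  set S := ∑ i, a i * |t i - c| ^ P
  have hgQ : ∀ i, |g i| ^ Q = |t i - c| ^ P := fun i => by
    rw [abs_rpow_sub_two_mul_self hP₁.ne', ← rpow_mul (abs_nonneg _), hPQ.sub_one_mul_conj]
  have hS : S = ∑ i, a i * (t i * (g i - ∑ j, a j * g j)) := by
    have h₁ := sum_mul_sub_sum_mul_eq_zero hsum t
    have h₂ := sum_mul_sub_sum_mul_eq_zero hsum g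
    calc S = ∑ i, a i * ((t i - c) * g i) :=
          sum_congr rfl fun i _ => by rw [mul_abs_rpow_sub_two_mul_self (by linarith)]
      _ = ∑ i, a i * (t i * (g i - ∑ j, a j * g j)) + (∑ j, a j * g j) * ∑ i, a i * (t i - c)
            - c * ∑ i, a i * (g i - ∑ j, a j * g j) := by
          simp only [mul_sum, ← sum_sub_distrib, ← sum_add_distrib]
          exact sum_congr rfl fun i _ => by ring
      _ = _ := by rw [h₁, h₂]; ring
  have hvar : ∑ i, a i * |g i - ∑ j, a j * g j| ^ Q ≤ 2 ^ (Q - 2) * S := by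
    simpa only [hgQ] using sum_mul_abs_sub_rpow_le_of_two_le hQ ha hsum g
  have hnonneg : ∀ (r : ℝ) (y : ι → ℝ), 0 ≤ ∑ i, a i * |y i| ^ r := fun r y =>
    sum_nonneg fun i _ => mul_nonneg (ha i) (rpow_nonneg (abs_nonneg _) _)
  have hdual : S ≤ (∑ i, a i * |t i| ^ P) ^ (1 / P) * (2 ^ (Q - 2) * S) ^ (1 / Q) :=
    hS.le.trans <| (sum_mul_mul_le_weighted_Lp_mul_Lq hPQ ha _ _).trans <|
      mul_le_mul_of_nonneg_left (rpow_le_rpow (hnonneg _ _) hvar hPQ.symm.one_div_nonneg)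
        (rpow_nonneg (hnonneg _ _) _)
  have hexp : (2 : ℝ) ^ (2 - P) = (2 ^ (Q - 2)) ^ (P - 1) := by
    rw [← rpow_mul zero_le_two, sub_mul, mul_comm Q, hPQ.sub_one_mul_conj]; ring_nf
  rw [hexp]
  exact Real.HolderConjugate.le_rpow_sub_one_mul_of_le hPQ (hnonneg _ _) (hnonneg _ _)
    (by positivity) hdual

lemma sum_mul_abs_sub_rpow_le (hP : 1 < P) (ha : ∀ i, 0 ≤ a i) (hsum : ∑ i, a i = 1)
    (t : ι → ℝ) :
    ∑ i, a i * |t i - ∑ j, a j * t j| ^ P ≤ 2 ^ |P - 2| * ∑ i, a i * |t i| ^ P := by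
  rcases le_total 2 P with h | h
  · rw [abs_of_nonneg (sub_nonneg.2 h)]
    exact sum_mul_abs_sub_rpow_le_of_two_le h ha hsum t
  · rw [abs_of_nonpos (sub_nonpos.2 h), neg_sub]
    exact sum_mul_abs_sub_rpow_le_of_le_two hP h ha hsum t

lemma exists_le_of_sum_mul_le (ha : ∀ i, 0 ≤ a i) (hsum : ∑ i, a i = 1) {f : ι → ℝ} {M : ℝ}
    (h : ∑ i, a i * f i ≤ M) : ∃ i, f i ≤ M := by
  obtain ⟨i, -, hi⟩ := (concaveOn_id convex_univ).exists_le_of_centerMass (t := univ)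
    (fun i _ => ha i) (by rw [hsum]; exact one_pos) (fun i _ => mem_univ (f i))
  exact ⟨i, hi.trans (by simpa [centerMass, hsum] using h)⟩

end WeightedSums

namespace MeasureTheory.Lp

variable {Ω E : Type*} [MeasurableSpace Ω] {μ : Measure Ω} [NormedAddCommGroup E] {p : ℝ≥0∞}

lemma coeFn_finset_sum {ι : Type*} (s : Finset ι) (f : ι → Lp E p μ) :
    ⇑(∑ i ∈ s, f i) =ᵐ[μ] ∑ i ∈ s, ⇑(f i) := by
  classical
  induction s using Finset.induction_on with
  | empty => simpa using coeFn_zero E p μ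
  | insert j s hj ih =>
    rw [sum_insert hj, sum_insert hj]
    exact (coeFn_add _ _).trans ((Filter.EventuallyEq.refl _ _).add ih)

lemma norm_rpow_toReal_eq_integral (hp₀ : p ≠ 0) (hp : p ≠ ∞) (f : Lp E p μ) :
    ‖f‖ ^ p.toReal = ∫ ω, ‖f ω‖ ^ p.toReal ∂μ := by
  rw [norm_def, toReal_eLpNorm (Lp.aestronglyMeasurable f),
    lpNorm_eq_integral_norm_rpow_toReal hp₀ hp (Lp.aestronglyMeasurable f),
    ← rpow_mul (integral_nonneg fun _ => by positivity),
    inv_mul_cancel₀ (ENNReal.toReal_pos hp₀ hp).ne', rpow_one]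

theorem sum_mul_norm_sub_rpow_le (hp : 1 < p) (hpt : p ≠ ∞) {ι : Type*} [Fintype ι]
    {a : ι → ℝ} (ha : ∀ i, 0 ≤ a i) (hsum : ∑ i, a i = 1) (x : ι → Lp ℝ p μ) :
    ∑ i, a i * ‖x i - ∑ j, a j • x j‖ ^ p.toReal
      ≤ 2 ^ |p.toReal - 2| * ∑ i, a i * ‖x i‖ ^ p.toReal := by
  have hp₀ : p ≠ 0 := (zero_lt_one.trans hp).ne'
  have hP : 1 < p.toReal := by
    simpa using (ENNReal.toReal_lt_toReal ENNReal.one_ne_top hpt).2 hp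
  have hint : ∀ f : Lp ℝ p μ, Integrable (fun ω => ‖f ω‖ ^ p.toReal) μ :=
    fun f => (Lp.memLp f).integrable_norm_rpow hp₀ hpt
  have hsum_int : ∀ y : ι → Lp ℝ p μ,
      ∑ i, a i * ‖y i‖ ^ p.toReal = ∫ ω, ∑ i, a i * ‖y i ω‖ ^ p.toReal ∂μ := fun y => by
    rw [integral_finsetSum _ fun i _ => (hint (y i)).const_mul (a i)]
    simp only [integral_const_mul, norm_rpow_toReal_eq_integral hp₀ hpt]
  have hcoe : ∀ᵐ ω ∂μ, ∀ i, (x i - ∑ j, a j • x j) ω = x i ω - ∑ j, a j * x j ω := by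
    rw [ae_all_iff]
    intro i
    filter_upwards [coeFn_sub (x i) (∑ j, a j • x j), coeFn_finset_sum univ (fun j => a j • x j),
      ae_all_iff.2 fun j => coeFn_smul (a j) (x j)] with ω h₁ h₂ h₃
    simp only [h₁, Pi.sub_apply, h₂, Finset.sum_apply, h₃, Pi.smul_apply, smul_eq_mul]
  rw [hsum_int, hsum_int, ← integral_const_mul]
  refine integral_mono_ae (integrable_finsetSum _ fun i _ => (hint _).const_mul _)
    ((integrable_finsetSum _ fun i _ => (hint _).const_mul _).const_mul _) ?_
  filter_upwards [hcoe] with ω hω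
  simpa only [hω, Real.norm_eq_abs] using sum_mul_abs_sub_rpow_le hP ha hsum (fun i => x i ω)

end MeasureTheory.Lp

lemma ENNReal.abs_one_div_toReal_sub_one_div_toReal {p p' : ℝ≥0∞} (hp : 1 < p) (hpt : p ≠ ∞)
    (hconj : 1 / p + 1 / p' = 1) :
    |1 / p.toReal - 1 / p'.toReal| = |p.toReal - 2| / p.toReal := by
  have hP : 1 < p.toReal := by
    simpa using (ENNReal.toReal_lt_toReal ENNReal.one_ne_top hpt).2 hp
  have hpp' : p.toReal.HolderConjugate p'.toReal :=
    (ENNReal.HolderConjugate.toReal_iff hP).2 ⟨by simpa [one_div] using hconj⟩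
  have h : 1 / p.toReal - 1 / p'.toReal = (2 - p.toReal) / p.toReal := by
    rw [one_div p'.toReal, ← hpp'.one_sub_inv]
    field_simp
    ring
  rw [h, abs_div, abs_of_pos (by linarith : 0 < p.toReal), abs_sub_comm]

theorem stmt_11 {Ω : Type*} [MeasurableSpace Ω] (μ : Measure Ω)
    (p p' : ℝ≥0∞) (hp : 1 < p) (hpt : p ≠ ∞) (hconj : 1 / p + 1 / p' = 1)
    (k : ℕ) (x : Fin k → Lp ℝ p μ) (hx : ∀ i, ‖x i‖ ≤ 1)
    (a : Fin k → ℝ) (ha : ∀ i, 0 ≤ a i) (hsum : ∑ i, a i = 1)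
    (x₀ : Lp ℝ p μ) (hx₀ : x₀ = ∑ i, a i • x i) :
    ∃ i, ‖x₀ - x i‖ ≤ (2 : ℝ) ^ |1 / p.toReal - 1 / p'.toReal| := by
  have : Fact (1 ≤ p) := ⟨hp.le⟩
  have hP : 0 < p.toReal := ENNReal.toReal_pos (zero_lt_one.trans hp).ne' hpt
  have hbound : ∑ i, a i * ‖x i‖ ^ p.toReal ≤ 1 :=
    (sum_le_sum fun i _ => mul_le_of_le_one_right (ha i)
      (rpow_le_one (norm_nonneg _) (hx i) hP.le)).trans hsum.le
  obtain ⟨i, hi⟩ := exists_le_of_sum_mul_le ha hsum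
    ((Lp.sum_mul_norm_sub_rpow_le hp hpt ha hsum x).trans
      (mul_le_of_le_one_right (by positivity) hbound))
  refine ⟨i, ?_⟩
  rw [ENNReal.abs_one_div_toReal_sub_one_div_toReal hp hpt hconj, div_eq_mul_inv,
    rpow_mul zero_le_two, le_rpow_inv_iff_of_pos (norm_nonneg _) (by positivity) hP, hx₀,
    norm_sub_rev]
  exact hi
end

section
/- Let X be a real Banach space and let a₁, a₂, a₃ ∈ X satisfy ‖aᵢ − aⱼ‖ ≤ 2R for all i, j (i.e., the triangle a₁a₂a₃ has diameter at most 2R). Suppose further the triangle co{a₁,a₂,a₃} is covered by the closed balls B_R(a₁), B_R(a₂), B_R(a₃). Then these three balls have a common point lying in the affine plane spanned by a₁, a₂, a₃. -/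
/-!
Let `Fᵢ` be the part of the triangle `T = co{a₁, a₂, a₃}` lying in `B_R(aᵢ)`. These are compact
convex sets covering `T`, and they meet pairwise at the midpoints of the sides. If `F₁ ∩ F₂` missed
`F₃`, a continuous functional `f` would separate them strictly; on a level set `{f = c}` between the
two, the convex (hence connected) slice of `T` avoids `F₃`, so it is covered by the closed sets
`F₁` and `F₂`. Both meet it by the intermediate value theorem, hence they meet inside the slice,
i.e. `F₁ ∩ F₂` reaches the level `c`: a contradiction.
-/

open Set Metric

theorem nonempty_inter_inter_of_convex_union {E : Type*} [TopologicalSpace E] [AddCommGroup E]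
    [Module ℝ E] [IsTopologicalAddGroup E] [ContinuousSMul ℝ E] [LocallyConvexSpace ℝ E]
    {A B C : Set E} (hA : Convex ℝ A) (hB : Convex ℝ B) (hC : Convex ℝ C)
    (hAc : IsClosed A) (hBc : IsClosed B) (hCc : IsClosed C) (hAB : IsCompact (A ∩ B))
    (hABC : Convex ℝ (A ∪ B ∪ C)) (hAB₀ : (A ∩ B).Nonempty) (hAC₀ : (A ∩ C).Nonempty)
    (hBC₀ : (B ∩ C).Nonempty) : (A ∩ B ∩ C).Nonempty := by
  by_contra h
  obtain ⟨f, u, v, hfu, huv, hfv⟩ := geometric_hahn_banach_compact_closed (hA.inter hB) hAB hC hCc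
    (disjoint_iff_inter_eq_empty.mpr (not_nonempty_iff_eq_empty.mp h))
  obtain ⟨c, huc, hcv⟩ := exists_between huv
  set D := (A ∪ B ∪ C) ∩ f ⁻¹' {c}
  have hD : Convex ℝ D := hABC.inter ((convex_singleton c).linear_preimage f.toLinearMap)
  have hDAB : D ⊆ A ∪ B := by
    rintro x ⟨hx | hx, hfx⟩
    · exact hx
    · linarith [hfv x hx, show f x = c from hfx]
  have hslice : ∀ F ⊆ A ∪ B ∪ C, Convex ℝ F → ∀ p ∈ F, p ∈ A ∩ B → ∀ q ∈ F, q ∈ C →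
      (D ∩ F).Nonempty := by
    intro F hF hFc p hpF hpAB q hqF hqC
    obtain ⟨s, hsF, hfs⟩ := hFc.isPreconnected.intermediate_value hpF hqF f.continuous.continuousOn
      ⟨(hfu p hpAB).trans huc |>.le, hcv.trans (hfv q hqC) |>.le⟩
    exact ⟨s, ⟨hF hsF, hfs⟩, hsF⟩
  obtain ⟨x, hxAB⟩ := hAB₀
  obtain ⟨y, hyA, hyC⟩ := hAC₀
  obtain ⟨y', hy'B, hy'C⟩ := hBC₀
  have hDA := hslice A (fun _ h ↦ .inl (.inl h)) hA x hxAB.1 hxAB y hyA hyC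
  have hDB := hslice B (fun _ h ↦ .inl (.inr h)) hB x hxAB.2 hxAB y' hy'B hy'C
  obtain ⟨w, hwD, hwAB⟩ := isPreconnected_closed_iff.mp hD.isPreconnected A B hAc hBc hDAB hDA hDB
  linarith [hfu w hwAB, show f w = c from hwD.2]

theorem midpoint_mem_closedBall_inter {V P : Type*} [NormedAddCommGroup V] [NormedSpace ℝ V]
    [PseudoMetricSpace P] [NormedAddTorsor V P] {p q : P} {R : ℝ} (h : dist p q ≤ 2 * R) :
    midpoint ℝ p q ∈ closedBall p R ∩ closedBall q R := by
  simp only [mem_inter_iff, mem_closedBall, dist_midpoint_left (𝕜 := ℝ),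
    dist_midpoint_right (𝕜 := ℝ), Real.norm_two]
  constructor <;> linarith

theorem stmt_12_general {X : Type*} [NormedAddCommGroup X] [NormedSpace ℝ X]
    (a₁ a₂ a₃ : X) (R : ℝ)
    (hdiam : ∀ x ∈ ({a₁, a₂, a₃} : Set X), ∀ y ∈ ({a₁, a₂, a₃} : Set X), dist x y ≤ 2 * R)
    (hcov : convexHull ℝ ({a₁, a₂, a₃} : Set X) ⊆
      Metric.closedBall a₁ R ∪ Metric.closedBall a₂ R ∪ Metric.closedBall a₃ R) :
    ∃ z, z ∈ Metric.closedBall a₁ R ∧ z ∈ Metric.closedBall a₂ R ∧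
      z ∈ Metric.closedBall a₃ R ∧ z ∈ affineSpan ℝ ({a₁, a₂, a₃} : Set X) := by
  set S : Set X := {a₁, a₂, a₃}
  have h₁ : a₁ ∈ S := by simp [S]
  have h₂ : a₂ ∈ S := by simp [S]
  have h₃ : a₃ ∈ S := by simp [S]
  set T := convexHull ℝ S
  have hT : IsCompact T := S.toFinite.isCompact_convexHull (𝕜 := ℝ)
  set F : X → Set X := fun p ↦ T ∩ closedBall p R
  have hFconv p : Convex ℝ (F p) := (convex_convexHull ℝ S).inter (convex_closedBall p R)
  have hFclosed p : IsClosed (F p) := hT.isClosed.inter isClosed_closedBall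
  have hpair : ∀ p ∈ S, ∀ q ∈ S, (F p ∩ F q).Nonempty := fun p hp q hq ↦
    have hm := midpoint_mem_closedBall_inter (hdiam p hp q hq)
    have hmT := (convex_convexHull ℝ S).midpoint_mem (subset_convexHull ℝ S hp)
      (subset_convexHull ℝ S hq)
    ⟨_, ⟨hmT, hm.1⟩, ⟨hmT, hm.2⟩⟩
  have hunion : F a₁ ∪ F a₂ ∪ F a₃ = T := by
    simp only [F, ← inter_union_distrib_left]
    exact inter_eq_left.mpr hcov
  obtain ⟨z, ⟨⟨hzT, hz₁⟩, -, hz₂⟩, -, hz₃⟩ := nonempty_inter_inter_of_convex_union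
    (hFconv a₁) (hFconv a₂) (hFconv a₃) (hFclosed a₁) (hFclosed a₂) (hFclosed a₃)
    (hT.inter_right isClosed_closedBall |>.inter_right (hFclosed a₂))
    (hunion ▸ convex_convexHull ℝ S) (hpair a₁ h₁ a₂ h₂) (hpair a₁ h₁ a₃ h₃) (hpair a₂ h₂ a₃ h₃)
  exact ⟨z, hz₁, hz₂, hz₃, convexHull_subset_affineSpan S hzT⟩

theorem stmt_12 {X : Type*} [NormedAddCommGroup X] [NormedSpace ℝ X] [CompleteSpace X]
    (a₁ a₂ a₃ : X) (R : ℝ)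
    (hdiam : ∀ x ∈ ({a₁, a₂, a₃} : Set X), ∀ y ∈ ({a₁, a₂, a₃} : Set X), dist x y ≤ 2 * R)
    (hcov : convexHull ℝ ({a₁, a₂, a₃} : Set X) ⊆
      Metric.closedBall a₁ R ∪ Metric.closedBall a₂ R ∪ Metric.closedBall a₃ R) :
    ∃ z, z ∈ Metric.closedBall a₁ R ∧ z ∈ Metric.closedBall a₂ R ∧
      z ∈ Metric.closedBall a₃ R ∧ z ∈ affineSpan ℝ ({a₁, a₂, a₃} : Set X) :=
  stmt_12_general a₁ a₂ a₃ R hdiam hcov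
end

section
/- In a real Hilbert space, let a₁,…,aₙ be points, C = co{a₁,…,aₙ} their convex hull, and suppose the balls B_R(aᵢ) cover C (an admissible covering). Then for any point a ∈ ⋃ᵢ B_R(aᵢ), the segment from a to its metric projection b onto C is contained in ⋃ᵢ B_R(aᵢ). Consequently ⋃ᵢ B_R(aᵢ) is contractible. -/
open Metric Set
open scoped RealInnerProductSpace

/-! The nearest point `b` to `x` in a convex set `C` sees every `w ∈ C` at an obtuse angle,
`⟪x - b, w - b⟫ ≤ 0`, so `b` is at least as close as `x` to every center `aᵢ ∈ C`. Hence if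
`x ∈ B_R(aᵢ)`, the whole segment `[x, b]` lies in the convex ball `B_R(aᵢ)`. The nearest-point
map is 1-Lipschitz, so sliding every point along its segment deforms the union into
`C ⊆ ⋃ᵢ B_R(aᵢ)`, and the convex set `C` contracts to a point. -/

section NearestPoint

variable {F : Type*} [NormedAddCommGroup F] [InnerProductSpace ℝ F] {K : Set F}

theorem Convex.inner_sub_nonpos_of_dist_eq_infDist (hK : Convex ℝ K) {x b w : F} (hb : b ∈ K)
    (hx : dist x b = infDist x K) (hw : w ∈ K) : ⟪x - b, w - b⟫ ≤ 0 := by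
  refine (norm_eq_iInf_iff_real_inner_le_zero hK hb).1 ?_ w hw
  simpa only [dist_eq_norm, infDist_eq_iInf] using hx

theorem dist_le_of_inner_sub_nonpos {x b w : F} (h : ⟪x - b, w - b⟫ ≤ 0) :
    dist w b ≤ dist w x := by
  have hsq : ‖w - x‖ ^ 2 = ‖w - b‖ ^ 2 - 2 * ⟪w - b, x - b⟫ + ‖x - b‖ ^ 2 := by
    rw [← norm_sub_sq_real, sub_sub_sub_cancel_right]
  rw [dist_eq_norm, dist_eq_norm, ← sq_le_sq₀ (norm_nonneg _) (norm_nonneg _), hsq,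
    real_inner_comm]
  nlinarith [sq_nonneg ‖x - b‖]

theorem dist_le_dist_of_inner_sub_nonpos {u v p q : F} (hp : ⟪u - p, q - p⟫ ≤ 0)
    (hq : ⟪v - q, p - q⟫ ≤ 0) : dist p q ≤ dist u v := by
  have hsq : ‖p - q‖ ^ 2 ≤ ⟪u - v, p - q⟫ := by
    have : ⟪u - v, p - q⟫ = ‖p - q‖ ^ 2 - ⟪u - p, q - p⟫ - ⟪v - q, p - q⟫ := by
      rw [← real_inner_self_eq_norm_sq, ← neg_sub p q, inner_neg_right, sub_neg_eq_add,
        ← inner_add_left, ← inner_sub_left]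
      congr 1; abel
    linarith
  rw [dist_eq_norm, dist_eq_norm]
  rcases (norm_nonneg (p - q)).eq_or_lt with h0 | h0
  · exact h0 ▸ norm_nonneg _
  · nlinarith [real_inner_le_norm (u - v) (p - q)]

theorem Convex.exists_lipschitzWith_dist_eq_infDist (hK : Convex ℝ K) (hc : IsComplete K)
    (hne : K.Nonempty) :
    ∃ p : F → F, LipschitzWith 1 p ∧ ∀ x, p x ∈ K ∧ dist x (p x) = infDist x K := by
  have hnearest : ∀ x, ∃ b ∈ K, dist x b = infDist x K := fun x => by
    obtain ⟨b, hb, hxb⟩ := exists_norm_eq_iInf_of_complete_convex hne hc hK x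
    exact ⟨b, hb, by simpa only [dist_eq_norm, infDist_eq_iInf] using hxb⟩
  choose p hpK hp using hnearest
  refine ⟨p, LipschitzWith.of_dist_le_mul fun u v => ?_, fun x => ⟨hpK x, hp x⟩⟩
  simpa only [NNReal.coe_one, one_mul] using dist_le_dist_of_inner_sub_nonpos
    (hK.inner_sub_nonpos_of_dist_eq_infDist (hpK u) (hp u) (hpK v))
    (hK.inner_sub_nonpos_of_dist_eq_infDist (hpK v) (hp v) (hpK u))

theorem Convex.segment_subset_iUnion_closedBall {ι : Type*} (hK : Convex ℝ K) {c : ι → F}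
    (hc : ∀ i, c i ∈ K) {R : ℝ} {x b : F} (hx : x ∈ ⋃ i, closedBall (c i) R) (hb : b ∈ K)
    (hxb : dist x b = infDist x K) : segment ℝ x b ⊆ ⋃ i, closedBall (c i) R := by
  obtain ⟨i, hxi⟩ := mem_iUnion.1 hx
  have hbi : b ∈ closedBall (c i) R := mem_closedBall'.2 <|
    (dist_le_of_inner_sub_nonpos (hK.inner_sub_nonpos_of_dist_eq_infDist hb hxb (hc i))).trans
      (mem_closedBall'.1 hxi)
  exact ((convex_closedBall _ _).segment_subset hxi hbi).trans
    (subset_iUnion (fun i => closedBall (c i) R) i)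

end NearestPoint

section Homotopy

variable {X E : Type*} [TopologicalSpace X] [AddCommGroup E] [TopologicalSpace E]
  [IsTopologicalAddGroup E] [Module ℝ E] [ContinuousSMul ℝ E] {U : Set E}

theorem ContinuousMap.Homotopic.of_segment_subset {f g : C(X, U)}
    (h : ∀ x, segment ℝ (f x : E) (g x) ⊆ U) : f.Homotopic g := by
  let val : C(U, E) := ⟨Subtype.val, continuous_subtype_val⟩
  let F := Homotopy.affine (val.comp f) (val.comp g)
  refine ⟨{ toFun := fun q => ⟨F q, h q.2 ?_⟩
            continuous_toFun := F.continuous.subtype_mk _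
            map_zero_left := fun x => Subtype.ext (by simp [F, val])
            map_one_left := fun x => Subtype.ext (by simp [F, val]) }⟩
  rw [segment_eq_image_lineMap]
  exact ⟨q.1, q.1.2, rfl⟩

theorem contractibleSpace_of_segment_subset {K : Set E} (hK : Convex ℝ K) (hne : K.Nonempty)
    (hKU : K ⊆ U) {p : E → E} (hp : Continuous p) (hpK : ∀ x ∈ U, p x ∈ K)
    (hseg : ∀ x ∈ U, segment ℝ x (p x) ⊆ U) : ContractibleSpace U := by
  obtain ⟨c, hc⟩ := hne
  let r : C(U, U) := ⟨fun x => ⟨p x, hKU (hpK x x.2)⟩, by fun_prop⟩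
  rw [contractible_iff_id_nullhomotopic]
  exact ⟨⟨c, hKU hc⟩, (ContinuousMap.Homotopic.of_segment_subset (g := r) fun x => hseg x x.2).trans
    (.of_segment_subset fun x => (hK.segment_subset (hpK x x.2) hc).trans hKU)⟩

end Homotopy

theorem stmt_14 {H : Type*} [NormedAddCommGroup H] [InnerProductSpace ℝ H]
    (n : ℕ) (hn : 0 < n) (a : Fin n → H) (R : ℝ)
    (hcov : convexHull ℝ (Set.range a) ⊆ ⋃ i, Metric.closedBall (a i) R) :
    (∀ x ∈ ⋃ i, Metric.closedBall (a i) R,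
      ∀ b ∈ convexHull ℝ (Set.range a),
        dist x b = Metric.infDist x (convexHull ℝ (Set.range a)) →
          segment ℝ x b ⊆ ⋃ i, Metric.closedBall (a i) R) ∧
    ContractibleSpace (⋃ i, Metric.closedBall (a i) R : Set H) := by
  set C := convexHull ℝ (range a)
  have hC : Convex ℝ C := convex_convexHull ℝ _
  have ha : ∀ i, a i ∈ C := fun i => subset_convexHull ℝ _ (mem_range_self i)
  have hseg : ∀ x ∈ ⋃ i, closedBall (a i) R, ∀ b ∈ C, dist x b = infDist x C →
      segment ℝ x b ⊆ ⋃ i, closedBall (a i) R :=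
    fun x hx b hb hxb => hC.segment_subset_iUnion_closedBall ha hx hb hxb
  have hne : C.Nonempty := ⟨_, ha ⟨0, hn⟩⟩
  obtain ⟨p, hp, hpC⟩ := hC.exists_lipschitzWith_dist_eq_infDist
    ((finite_range a).isCompact_convexHull ℝ).isComplete hne
  exact ⟨hseg, contractibleSpace_of_segment_subset hC hne hcov hp.continuous
    (fun x _ => (hpC x).1) fun x hx => hseg x hx _ (hpC x).1 (hpC x).2⟩
end

section
/- In ℓ₁³ (ℝ³ with the ℓ¹-norm), let a₁ = (−2/3, 1/3, 1/3), a₂ = (1/3, −2/3, 1/3), a₃ = (1/3, 1/3, −2/3), a₄ = (−1/6, −1/6, −1/6). Then the convex hull (tetrahedron) co{a₁,a₂,a₃,a₄} is covered by the four closed unit balls B₁(aᵢ), i = 1,…,4. -/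
/-!
Write a point of the tetrahedron as `∑ wᵢ aᵢ` with barycentric weights `w`. The vertices
`a₁, a₂, a₃` are at ℓ¹-distance `2` from each other and `3/2` from `a₄`, so by the triangle
inequality the point lies within `2 (1 - wᵢ)` of `aᵢ`, which settles the case `wᵢ ≥ 1/2` for some
`i ≤ 3`. Otherwise compute exactly: with `S = w₁ + w₂ + w₃`, the point minus `a₄` has coordinates
`S/2 - wₖ`. At most one `wₖ` exceeds `S/2`, so the ℓ¹-norm is `S/2` or `2 wₖ - S/2`, both `≤ 1`.
-/

open Set Finset

theorem convexHull_range_eq_image_stdSimplex {ι E : Type*} [Fintype ι] [AddCommGroup E]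
    [Module ℝ E] (v : ι → E) :
    convexHull ℝ (range v) = (fun w => ∑ i, w i • v i) '' stdSimplex ℝ ι := by
  classical
  have hv : range v = Fintype.linearCombination ℝ v '' range fun i => Pi.single i 1 := by
    rw [← range_comp]; congr 1; ext i; simp
  rw [hv, ← LinearMap.image_convexHull, convexHull_rangle_single_eq_stdSimplex]
  rfl

theorem dist_sum_smul_le {ι E : Type*} [Fintype ι] [SeminormedAddCommGroup E] [NormedSpace ℝ E]
    {w : ι → ℝ} (hw : w ∈ stdSimplex ℝ ι) {v : ι → E} {i : ι} {D : ℝ}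
    (hD : ∀ j, dist (v j) (v i) ≤ D) :
    dist (∑ j, w j • v j) (v i) ≤ (1 - w i) * D := by
  classical
  have hsub : ∑ j, w j • v j - v i = ∑ j, w j • (v j - v i) := by
    simp only [smul_sub, Finset.sum_sub_distrib, ← Finset.sum_smul, hw.2, one_smul]
  calc dist (∑ j, w j • v j) (v i) = ‖∑ j, w j • (v j - v i)‖ := by rw [dist_eq_norm, hsub]
    _ ≤ ∑ j, w j * dist (v j) (v i) := by
        refine (norm_sum_le _ _).trans_eq (Finset.sum_congr rfl fun j _ => ?_)
        rw [norm_smul, Real.norm_of_nonneg (hw.1 j), dist_eq_norm]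
    _ = ∑ j ∈ univ.erase i, w j * dist (v j) (v i) := by
        rw [← Finset.sum_erase_add _ _ (mem_univ i), dist_self, mul_zero, add_zero]
    _ ≤ ∑ j ∈ univ.erase i, w j * D :=
        Finset.sum_le_sum fun j _ => mul_le_mul_of_nonneg_left (hD j) (hw.1 j)
    _ = (1 - w i) * D := by
        rw [← Finset.sum_mul, ← hw.2, ← Finset.sum_erase_add _ _ (mem_univ i),
          add_sub_cancel_right]

theorem abs_half_sub_add_le_one {s₁ s₂ s₃ : ℝ} (h₁ : 0 ≤ s₁) (h₂ : 0 ≤ s₂) (h₃ : 0 ≤ s₃)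
    (h₁' : s₁ ≤ 1 / 2) (h₂' : s₂ ≤ 1 / 2) (h₃' : s₃ ≤ 1 / 2) (hs : s₁ + s₂ + s₃ ≤ 1) :
    |(s₁ + s₂ + s₃) / 2 - s₁| + |(s₁ + s₂ + s₃) / 2 - s₂| + |(s₁ + s₂ + s₃) / 2 - s₃| ≤ 1 := by
  rcases abs_cases ((s₁ + s₂ + s₃) / 2 - s₁) with ⟨e₁, _⟩ | ⟨e₁, _⟩ <;>
  rcases abs_cases ((s₁ + s₂ + s₃) / 2 - s₂) with ⟨e₂, _⟩ | ⟨e₂, _⟩ <;>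
  rcases abs_cases ((s₁ + s₂ + s₃) / 2 - s₃) with ⟨e₃, _⟩ | ⟨e₃, _⟩ <;> linarith

noncomputable abbrev tetraVertex : Fin 4 → PiLp 1 fun _ : Fin 3 => ℝ :=
  ![(WithLp.equiv 1 (Fin 3 → ℝ)).symm ![-2/3, 1/3, 1/3],
    (WithLp.equiv 1 (Fin 3 → ℝ)).symm ![1/3, -2/3, 1/3],
    (WithLp.equiv 1 (Fin 3 → ℝ)).symm ![1/3, 1/3, -2/3],
    (WithLp.equiv 1 (Fin 3 → ℝ)).symm ![-1/6, -1/6, -1/6]]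

theorem dist_tetraVertex_le_two (i j : Fin 4) (hi : i ≠ 3) :
    dist (tetraVertex j) (tetraVertex i) ≤ 2 := by
  rw [PiLp.dist_eq_of_L1]
  fin_cases i <;> fin_cases j <;>
    norm_num [Fin.sum_univ_three, Real.dist_eq, Matrix.cons_val_two, Matrix.tail_cons,
      Matrix.head_cons, abs_of_nonneg, abs_of_nonpos] at hi ⊢

theorem dist_sum_smul_tetraVertex_three (w : Fin 4 → ℝ) (hw : ∑ i, w i = 1) :
    dist (∑ j, w j • tetraVertex j) (tetraVertex 3) =
      |(w 0 + w 1 + w 2) / 2 - w 0| + |(w 0 + w 1 + w 2) / 2 - w 1| +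
        |(w 0 + w 1 + w 2) / 2 - w 2| := by
  rw [Fin.sum_univ_four] at hw
  rw [PiLp.dist_eq_of_L1, Fin.sum_univ_three]
  simp only [Fin.sum_univ_four, Matrix.cons_val_zero, Matrix.cons_val_one, Matrix.cons_val,
    WithLp.equiv_symm_apply, PiLp.add_apply, PiLp.smul_apply, smul_eq_mul, Real.dist_eq]
  rw [show w 3 = 1 - w 0 - w 1 - w 2 by linarith]
  refine congrArg₂ (· + ·) (congrArg₂ (· + ·) ?_ ?_) ?_ <;> congr 1 <;> ring

theorem stmt_16
    (a₁ a₂ a₃ a₄ : PiLp 1 fun _ : Fin 3 => ℝ)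
    (h₁ : a₁ = (WithLp.equiv 1 (Fin 3 → ℝ)).symm ![-2/3, 1/3, 1/3])
    (h₂ : a₂ = (WithLp.equiv 1 (Fin 3 → ℝ)).symm ![1/3, -2/3, 1/3])
    (h₃ : a₃ = (WithLp.equiv 1 (Fin 3 → ℝ)).symm ![1/3, 1/3, -2/3])
    (h₄ : a₄ = (WithLp.equiv 1 (Fin 3 → ℝ)).symm ![-1/6, -1/6, -1/6]) :
    convexHull ℝ ({a₁, a₂, a₃, a₄} : Set (PiLp 1 fun _ : Fin 3 => ℝ)) ⊆
      Metric.closedBall a₁ 1 ∪ Metric.closedBall a₂ 1 ∪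
        Metric.closedBall a₃ 1 ∪ Metric.closedBall a₄ 1 := by
  obtain rfl : a₁ = tetraVertex 0 := h₁
  obtain rfl : a₂ = tetraVertex 1 := h₂
  obtain rfl : a₃ = tetraVertex 2 := h₃
  obtain rfl : a₄ = tetraVertex 3 := h₄
  have hrange : ({tetraVertex 0, tetraVertex 1, tetraVertex 2, tetraVertex 3} : Set _) =
      range tetraVertex := by
    simp only [Matrix.range_cons, Matrix.range_empty, Set.union_empty, Set.singleton_union]
    rfl
  rintro _ hx
  rw [hrange, convexHull_range_eq_image_stdSimplex] at hx
  obtain ⟨w, hw, rfl⟩ := hx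
  have mem_closedBall_of_half_le (i : Fin 4) (hi : i ≠ 3) (hwi : 1 / 2 ≤ w i) :
      ∑ j, w j • tetraVertex j ∈ Metric.closedBall (tetraVertex i) 1 := by
    have := dist_sum_smul_le hw (fun j => dist_tetraVertex_le_two i j hi)
    rw [Metric.mem_closedBall]; linarith
  by_cases h0 : 1 / 2 ≤ w 0
  · exact .inl <| .inl <| .inl <| mem_closedBall_of_half_le 0 (by decide) h0
  by_cases h1 : 1 / 2 ≤ w 1
  · exact .inl <| .inl <| .inr <| mem_closedBall_of_half_le 1 (by decide) h1
  by_cases h2 : 1 / 2 ≤ w 2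
  · exact .inl <| .inr <| mem_closedBall_of_half_le 2 (by decide) h2
  have hsum := hw.2
  rw [Fin.sum_univ_four] at hsum
  refine .inr ?_
  rw [Metric.mem_closedBall, dist_sum_smul_tetraVertex_three w hw.2]
  exact abs_half_sub_add_le_one (hw.1 0) (hw.1 1) (hw.1 2) (by linarith) (by linarith)
    (by linarith) (by linarith [hw.1 3])
end

section
/- In ℓ₁³ with a₁ = (−2/3, 1/3, 1/3), a₂ = (1/3, −2/3, 1/3), a₃ = (1/3, 1/3, −2/3), a₄ = (−1/6, −1/6, −1/6), the interior of the tetrahedron Δ with vertices b₁ = (1/3, 1/12, 1/12), b₂ = (1/12, 1/3, 1/12), b₃ = (1/12, 1/12, 1/3), b₄ = (1/3, 1/3, 1/3) is disjoint from ⋃ᵢ B₁(aᵢ), while the boundary ∂Δ is contained in ⋃ᵢ B₁(aᵢ). In particular the union of those four unit balls is not simply connected (its complement has a bounded component). -/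
/-!
With the sign vectors σ₁ = (1,-1,-1), σ₂ = (-1,1,-1), σ₃ = (-1,-1,1), σ₄ = (1,1,1), the tetrahedron is
Δ = {x | ∀ k, 1 ≤ ⟪σₖ, x - aₖ⟫}: each facet of Δ lies in the plane of a facet of the octahedron B₁(aₖ).
Since ⟪σ, y⟫ ≤ ‖y‖₁ whenever |σᵢ| ≤ 1, interior points of Δ are at distance more than 1 from every aₖ.
Moreover Δ lies in the orthant around aₖ on which ‖x - aₖ‖₁ = ⟪σₖ, x - aₖ⟫, so a boundary point, which
satisfies ⟪σₖ, x - aₖ⟫ = 1 for some k, is at distance exactly 1 from that aₖ.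
-/

open Set Metric WithLp

local notation "ℓ¹[" ι "]" => PiLp 1 fun _ : ι => ℝ

theorem ContinuousLinearMap.interior_setOf_le {E : Type*} [NormedAddCommGroup E]
    [NormedSpace ℝ E] [CompleteSpace E] {f : E →L[ℝ] ℝ} (hf : f ≠ 0) (r : ℝ) :
    interior {x | r ≤ f x} = {x | r < f x} := by
  have hsurj : Function.Surjective f :=
    LinearMap.surjective_of_ne_zero (f := (f : E →ₗ[ℝ] ℝ)) (by exact_mod_cast hf)
  change interior (f ⁻¹' Ici r) = f ⁻¹' Ioi r
  rw [f.interior_preimage hsurj, interior_Ici]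

section Pairing

variable {ι : Type*} [Fintype ι]

def pairing (σ : ι → ℝ) : ℓ¹[ι] →L[ℝ] ℝ := ∑ i, σ i • PiLp.proj 1 (fun _ : ι => ℝ) i

@[simp]
theorem pairing_apply (σ : ι → ℝ) (x : ℓ¹[ι]) : pairing σ x = ∑ i, σ i * x i := by
  simp [pairing]

theorem pairing_ne_zero {σ : ι → ℝ} (hσ : σ ≠ 0) : pairing σ ≠ 0 := by
  classical
  obtain ⟨i, hi⟩ := Function.ne_iff.1 hσ
  refine DFunLike.ne_iff.2 ⟨toLp 1 (Pi.single i 1), ?_⟩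
  simpa [Pi.single_apply] using hi

theorem pairing_le_norm {σ : ι → ℝ} (hσ : ∀ i, |σ i| ≤ 1) (x : ℓ¹[ι]) : pairing σ x ≤ ‖x‖ := by
  rw [pairing_apply, PiLp.norm_eq_of_L1]
  gcongr with i
  calc σ i * x i ≤ |σ i| * |x i| := by rw [← abs_mul]; exact le_abs_self _
    _ ≤ ‖x i‖ := by rw [Real.norm_eq_abs]; exact mul_le_of_le_one_left (abs_nonneg _) (hσ i)

theorem norm_eq_pairing {σ : ι → ℝ} (hσ : ∀ i, |σ i| = 1) {x : ℓ¹[ι]} (hx : ∀ i, 0 ≤ σ i * x i) :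
    ‖x‖ = pairing σ x := by
  rw [pairing_apply, PiLp.norm_eq_of_L1]
  congr with i
  rw [Real.norm_eq_abs, ← abs_of_nonneg (hx i), abs_mul, hσ i, one_mul]

end Pairing

section BeyondFacets

variable {ι κ : Type*} [Fintype ι] (σ : κ → ι → ℝ) (a : κ → ℓ¹[ι])

def beyondFacets : Set ℓ¹[ι] := ⋂ k, {x | 1 ≤ pairing (σ k) (x - a k)}

theorem isClosed_beyondFacets : IsClosed (beyondFacets σ a) :=
  isClosed_iInter fun _ => isClosed_le continuous_const (by fun_prop)

theorem convex_beyondFacets : Convex ℝ (beyondFacets σ a) := by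
  refine convex_iInter fun k => ?_
  simp only [map_sub, le_sub_iff_add_le]
  exact convex_halfSpace_ge (pairing (σ k)).isLinear _

theorem interior_beyondFacets_subset {σ : κ → ι → ℝ} (hσ : ∀ k, σ k ≠ 0) :
    interior (beyondFacets σ a) ⊆ {x | ∀ k, 1 < pairing (σ k) (x - a k)} := by
  intro x hx k
  have hk := interior_mono (iInter_subset _ k) hx
  simp only [map_sub, le_sub_iff_add_le, lt_sub_iff_add_lt] at hk ⊢
  rwa [ContinuousLinearMap.interior_setOf_le (pairing_ne_zero (hσ k))] at hk

theorem subset_interior_beyondFacets [Finite κ] :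
    {x | ∀ k, 1 < pairing (σ k) (x - a k)} ⊆ interior (beyondFacets σ a) := by
  refine interior_maximal (fun x hx => mem_iInter.2 fun k => (hx k).le) ?_
  simp only [ofPred_forall]
  exact isOpen_iInter_of_finite fun k => isOpen_lt continuous_const (by fun_prop)

variable {σ a}

theorem one_lt_dist_of_mem_interior_beyondFacets (hσ : ∀ k i, |σ k i| ≤ 1)
    (hσ₀ : ∀ k, σ k ≠ 0) {x : ℓ¹[ι]} (hx : x ∈ interior (beyondFacets σ a)) (k : κ) :
    1 < dist x (a k) :=
  (interior_beyondFacets_subset a hσ₀ hx k).trans_le <| by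
    rw [dist_eq_norm]; exact pairing_le_norm (hσ k) _

theorem exists_dist_eq_one_of_mem_frontier_beyondFacets [Finite κ] (hσ : ∀ k i, |σ k i| = 1)
    (horth : ∀ x ∈ beyondFacets σ a, ∀ k i, 0 ≤ σ k i * (x i - a k i)) {x : ℓ¹[ι]}
    (hx : x ∈ frontier (beyondFacets σ a)) : ∃ k, dist x (a k) = 1 := by
  rw [(isClosed_beyondFacets σ a).frontier_eq] at hx
  obtain ⟨hxP, hxi⟩ := hx
  obtain ⟨k, hk⟩ : ∃ k, pairing (σ k) (x - a k) ≤ 1 := by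
    by_contra! h
    exact hxi (subset_interior_beyondFacets σ a h)
  refine ⟨k, ?_⟩
  rw [dist_eq_norm, norm_eq_pairing (hσ k) (by simpa using horth x hxP k)]
  exact hk.antisymm (mem_iInter.1 hxP k)

end BeyondFacets

def tetraFacetSigns : Fin 4 → Fin 3 → ℝ := ![![1, -1, -1], ![-1, 1, -1], ![-1, -1, 1], ![1, 1, 1]]

noncomputable def tetraBallCenters : Fin 4 → ℓ¹[Fin 3] :=
  ![toLp 1 ![-2/3, 1/3, 1/3], toLp 1 ![1/3, -2/3, 1/3], toLp 1 ![1/3, 1/3, -2/3],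
    toLp 1 ![-1/6, -1/6, -1/6]]

theorem abs_tetraFacetSigns (k : Fin 4) (i : Fin 3) : |tetraFacetSigns k i| = 1 := by
  fin_cases k <;> fin_cases i <;> simp [tetraFacetSigns]

theorem mem_beyondFacets_tetra_iff (x : ℓ¹[Fin 3]) :
    x ∈ beyondFacets tetraFacetSigns tetraBallCenters ↔
      x 1 + x 2 - x 0 ≤ 1/3 ∧ x 0 + x 2 - x 1 ≤ 1/3 ∧ x 0 + x 1 - x 2 ≤ 1/3 ∧
        1/2 ≤ x 0 + x 1 + x 2 := by
  simp only [beyondFacets, mem_iInter, mem_ofPred_eq, Fin.forall_fin_succ, pairing_apply,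
    Fin.sum_univ_three, PiLp.sub_apply, tetraFacetSigns, tetraBallCenters, Fin.succ_zero_eq_one,
    Fin.succ_one_eq_two, Fin.reduceSucc, Matrix.cons_val, PiLp.toLp_apply, IsEmpty.forall_iff,
    and_true]
  constructor <;> rintro ⟨h₁, h₂, h₃, h₄⟩ <;> refine ⟨?_, ?_, ?_, ?_⟩ <;> linarith

theorem tetraFacetSigns_mul_sub_nonneg {x : ℓ¹[Fin 3]}
    (hx : x ∈ beyondFacets tetraFacetSigns tetraBallCenters) (k : Fin 4) (i : Fin 3) :
    0 ≤ tetraFacetSigns k i * (x i - tetraBallCenters k i) := by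
  obtain ⟨h₁, h₂, h₃, h₄⟩ := (mem_beyondFacets_tetra_iff x).1 hx
  fin_cases k <;> fin_cases i <;>
    simp only [tetraFacetSigns, tetraBallCenters, Fin.zero_eta, Fin.mk_one, Fin.reduceFinMk,
      Matrix.cons_val, PiLp.toLp_apply] <;> linarith

theorem convexHull_tetra_eq_beyondFacets :
    convexHull ℝ {toLp 1 ![1/3, 1/12, 1/12], toLp 1 ![1/12, 1/3, 1/12],
      toLp 1 ![1/12, 1/12, 1/3], toLp 1 ![1/3, 1/3, 1/3]} =
      beyondFacets tetraFacetSigns tetraBallCenters := by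
  refine (convexHull_min ?_ (convex_beyondFacets _ _)).antisymm fun x hx => ?_
  · simp only [insert_subset_iff, singleton_subset_iff, mem_beyondFacets_tetra_iff]
    norm_num [Matrix.cons_val_two]
  · obtain ⟨h₁, h₂, h₃, h₄⟩ := (mem_beyondFacets_tetra_iff x).1 hx
    -- The weight of the k-th vertex is 2 (⟪σₖ, x - aₖ⟫ - 1): it vanishes on the opposite facet
    -- and equals 1 at the vertex.
    refine mem_convexHull_of_exists_fintype
      ![2/3 - 2 * (x 1 + x 2 - x 0), 2/3 - 2 * (x 0 + x 2 - x 1), 2/3 - 2 * (x 0 + x 1 - x 2),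
        2 * (x 0 + x 1 + x 2) - 1]
      ![toLp 1 ![1/3, 1/12, 1/12], toLp 1 ![1/12, 1/3, 1/12],
        toLp 1 ![1/12, 1/12, 1/3], toLp 1 ![1/3, 1/3, 1/3]] ?_ ?_ ?_ ?_
    · intro k
      fin_cases k <;> simp only [Fin.zero_eta, Fin.mk_one, Fin.reduceFinMk, Matrix.cons_val] <;>
        linarith
    · simp only [Fin.sum_univ_four, Matrix.cons_val]; ring
    · intro k; fin_cases k <;> simp
    · ext i; fin_cases i <;>
        simp only [Fin.sum_univ_four, Fin.zero_eta, Fin.mk_one, Fin.reduceFinMk, Matrix.cons_val,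
          PiLp.add_apply, PiLp.smul_apply, smul_eq_mul] <;> ring

theorem stmt_17
    (a₁ a₂ a₃ a₄ b₁ b₂ b₃ b₄ : PiLp 1 fun _ : Fin 3 => ℝ)
    (ha₁ : a₁ = (WithLp.equiv 1 (Fin 3 → ℝ)).symm ![-2/3, 1/3, 1/3])
    (ha₂ : a₂ = (WithLp.equiv 1 (Fin 3 → ℝ)).symm ![1/3, -2/3, 1/3])
    (ha₃ : a₃ = (WithLp.equiv 1 (Fin 3 → ℝ)).symm ![1/3, 1/3, -2/3])
    (ha₄ : a₄ = (WithLp.equiv 1 (Fin 3 → ℝ)).symm ![-1/6, -1/6, -1/6])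
    (hb₁ : b₁ = (WithLp.equiv 1 (Fin 3 → ℝ)).symm ![1/3, 1/12, 1/12])
    (hb₂ : b₂ = (WithLp.equiv 1 (Fin 3 → ℝ)).symm ![1/12, 1/3, 1/12])
    (hb₃ : b₃ = (WithLp.equiv 1 (Fin 3 → ℝ)).symm ![1/12, 1/12, 1/3])
    (hb₄ : b₄ = (WithLp.equiv 1 (Fin 3 → ℝ)).symm ![1/3, 1/3, 1/3])
    (B : Set (PiLp 1 fun _ : Fin 3 => ℝ))
    (hB : B = Metric.closedBall a₁ 1 ∪ Metric.closedBall a₂ 1 ∪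
        Metric.closedBall a₃ 1 ∪ Metric.closedBall a₄ 1)
    (Δ : Set (PiLp 1 fun _ : Fin 3 => ℝ))
    (hΔ : Δ = convexHull ℝ ({b₁, b₂, b₃, b₄} : Set (PiLp 1 fun _ : Fin 3 => ℝ))) :
    interior Δ ∩ B = ∅ ∧ frontier Δ ⊆ B := by
  subst ha₁ ha₂ ha₃ ha₄ hb₁ hb₂ hb₃ hb₄ hΔ
  rw [WithLp.equiv_symm_apply, convexHull_tetra_eq_beyondFacets]
  have hB' : B = ⋃ k, closedBall (tetraBallCenters k) 1 := by
    ext x; simp [hB, tetraBallCenters, Fin.exists_fin_succ, or_assoc]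
  refine ⟨eq_empty_of_forall_notMem fun x ⟨hx, hxB⟩ => ?_, fun x hx => ?_⟩
  · obtain ⟨k, hk⟩ := mem_iUnion.1 (hB' ▸ hxB)
    have hσ₀ (k : Fin 4) : tetraFacetSigns k ≠ 0 := fun h => by
      simpa [h] using abs_tetraFacetSigns k 0
    exact (one_lt_dist_of_mem_interior_beyondFacets (fun k i => (abs_tetraFacetSigns k i).le)
      hσ₀ hx k).not_ge hk
  · obtain ⟨k, hk⟩ := exists_dist_eq_one_of_mem_frontier_beyondFacets abs_tetraFacetSigns
      (fun _ hx => tetraFacetSigns_mul_sub_nonneg hx) hx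
    exact hB' ▸ mem_iUnion.2 ⟨k, hk.le⟩
end

section
/- Let X be a finite-dimensional real Banach space, dim X = n ≥ 2. Let P and Q be the intersections of the closed unit ball with two parallel affine subspaces of dimension k, where the subspace containing P passes through the origin. Then Q can be covered by a translate of η·P, where η = min{2k/(k+1), ζ_X}. In particular, every k-simplex Δ ⊆ Q is contained in a ball of radius η (in the norm whose unit ball section is P) centered at a point of Δ. -/
open scoped Pointwise

/-!
Let `S ⊆ Q` be finite and `y ∈ conv S`. The point of `S` nearest to `y` is within `ζ_X` of `y` by
definition of the CHD-constant; it is also within `2k/(k+1)`, because by Carathéodory `y` lies in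
a simplex with at most `k + 1` vertices in `S`, one of its barycentric weights is at least
`1/(k+1)`, and the distance to that vertex is at most `2 (1 - 1/(k+1))`. Thus the closed
`η`-balls around the points of `S` cover `conv S`, and a Berge-type intersection lemma (proved by
slicing with a separating hyperplane) shows that these balls have a common point in `conv S ⊆ Q`.
By compactness of `Q`, all the balls `closedBall q η`, `q ∈ Q`, share a point `t ∈ Q`, and then
`Q ⊆ t + η • P`.
-/

open Metric Set Finset

section Berge

variable {E : Type*} [AddCommGroup E] [Module ℝ E] [TopologicalSpace E] [IsTopologicalAddGroup E]
  [ContinuousSMul ℝ E] [LocallyConvexSpace ℝ E] [T2Space E]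

theorem Convex.inter_biInter_nonempty_of_subset_biUnion {ι : Type*} [DecidableEq ι]
    {K : ι → Set E} (hKconv : ∀ i, Convex ℝ (K i)) (hKclosed : ∀ i, IsClosed (K i))
    {s : Finset ι} (hs : s.Nonempty) {Δ : Set E} (hΔ : Convex ℝ Δ) (hΔc : IsCompact Δ)
    (hcover : Δ ⊆ ⋃ i ∈ s, K i) (herase : ∀ i ∈ s, (Δ ∩ ⋂ j ∈ s.erase i, K j).Nonempty) :
    (Δ ∩ ⋂ i ∈ s, K i).Nonempty := by
  induction s using Finset.induction_on generalizing Δ with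
  | empty => exact absurd hs Finset.not_nonempty_empty
  | insert i t hit ih =>
    rcases t.eq_empty_or_nonempty with rfl | ht
    · obtain ⟨x, hx, -⟩ := herase i (mem_singleton_self i)
      exact ⟨x, hx, by simpa using hcover hx⟩
    by_contra hempty
    have hconvex (r : Finset ι) : Convex ℝ (Δ ∩ ⋂ j ∈ r, K j) :=
      hΔ.inter (convex_iInter₂ fun j _ ↦ hKconv j)
    have hdisj : Disjoint (Δ ∩ K i) (Δ ∩ ⋂ j ∈ t, K j) :=
      Set.disjoint_left.2 fun x ⟨hxΔ, hxi⟩ ⟨_, hxt⟩ ↦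
        hempty ⟨x, hxΔ, by rw [set_biInter_insert]; exact ⟨hxi, hxt⟩⟩
    obtain ⟨f, u, v, hfi, huv, hft⟩ := geometric_hahn_banach_compact_closed
      (hΔ.inter (hKconv i)) (hΔc.inter_right (hKclosed i)) (hconvex t)
      (hΔc.isClosed.inter (isClosed_biInter fun j _ ↦ hKclosed j)) hdisj
    -- The hyperplane `f = u` separates `K i` from `⋂ j ∈ t, K j` inside `Δ`; its trace on `Δ`
    -- satisfies the hypotheses for the smaller family `t`.
    set M := Δ ∩ {x | f x = u}
    obtain ⟨b, hbΔ, hbt⟩ : (Δ ∩ ⋂ j ∈ t, K j).Nonempty := by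
      simpa [erase_insert hit] using herase i (mem_insert_self i t)
    have hsection (r : Finset ι) (hr : r ⊆ t) (hir : (Δ ∩ K i ∩ ⋂ j ∈ r, K j).Nonempty) :
        (M ∩ ⋂ j ∈ r, K j).Nonempty := by
      obtain ⟨a, ⟨haΔ, hai⟩, har⟩ := hir
      have hbr : b ∈ Δ ∩ ⋂ j ∈ r, K j :=
        ⟨hbΔ, biInter_subset_biInter_left (fun j hj ↦ hr hj) hbt⟩
      obtain ⟨c, ⟨hcΔ, hcr⟩, hfc⟩ := (hconvex r).isPreconnected.intermediate_value ⟨haΔ, har⟩ hbr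
        f.continuous.continuousOn ⟨(hfi a ⟨haΔ, hai⟩).le, (huv.trans (hft b ⟨hbΔ, hbt⟩)).le⟩
      exact ⟨c, ⟨hcΔ, hfc⟩, hcr⟩
    have hMcover : M ⊆ ⋃ j ∈ t, K j := by
      intro x ⟨hxΔ, hfx⟩
      obtain ⟨j, hj, hxj⟩ := mem_iUnion₂.1 (hcover hxΔ)
      rcases Finset.mem_insert.1 hj with rfl | hjt
      · exact absurd hfx (hfi x ⟨hxΔ, hxj⟩).ne
      · exact mem_biUnion hjt hxj
    have hMerase (j : ι) (hj : j ∈ t) : (M ∩ ⋂ l ∈ t.erase j, K l).Nonempty := by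
      refine hsection _ (erase_subset j t) ?_
      have hji : j ≠ i := fun h ↦ hit (h ▸ hj)
      simpa [erase_insert_of_ne hji.symm, set_biInter_insert, inter_assoc]
        using herase j (mem_insert_of_mem hj)
    obtain ⟨z, ⟨hzΔ, hfz⟩, hzt⟩ := ih ht (hΔ.inter (convex_hyperplane f.isLinear u))
      (hΔc.inter_right (isClosed_eq f.continuous continuous_const)) hMcover hMerase
    exact (huv.trans (hft z ⟨hzΔ, hzt⟩)).ne' hfz

end Berge

section Normed

variable {E : Type*} [NormedAddCommGroup E] [NormedSpace ℝ E]

theorem convexHull_inter_biInter_closedBall_nonempty {r : ℝ} (S : Finset E) (hS : S.Nonempty)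
    (hcover : ∀ T ⊆ S, ∀ y ∈ convexHull ℝ (T : Set E), ∃ x ∈ T, dist y x ≤ r) :
    (convexHull ℝ (S : Set E) ∩ ⋂ x ∈ S, closedBall x r).Nonempty := by
  classical
  induction S using Finset.strongInduction with
  | H S ih =>
    refine Convex.inter_biInter_nonempty_of_subset_biUnion (fun x ↦ convex_closedBall x r)
      (fun x ↦ isClosed_closedBall) hS (convex_convexHull ℝ _)
      (S.finite_toSet.isCompact_convexHull ℝ) (fun y hy ↦ ?_) (fun i hi ↦ ?_)
    · obtain ⟨x, hx, hyx⟩ := hcover S subset_rfl y hy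
      exact mem_biUnion hx (mem_closedBall.2 hyx)
    · have hsub : (S.erase i : Set E) ⊆ S := coe_subset.2 (erase_subset i S)
      rcases (S.erase i).eq_empty_or_nonempty with he | he
      · obtain ⟨x, hx⟩ := hS
        exact ⟨x, subset_convexHull ℝ _ hx, by simp [he]⟩
      · obtain ⟨z, hz, hzb⟩ := ih _ (erase_ssubset hi) he
          fun T hT ↦ hcover T (hT.trans (erase_subset i S))
        exact ⟨z, convexHull_mono hsub hz, hzb⟩

theorem IsCompact.exists_mem_forall_dist_le_of_convexHull {Q : Set E} (hQ : IsCompact Q)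
    (hQconv : Convex ℝ Q) (hQne : Q.Nonempty) {r : ℝ}
    (hcover : ∀ S : Finset E, ↑S ⊆ Q → ∀ y ∈ convexHull ℝ (S : Set E), ∃ x ∈ S, dist y x ≤ r) :
    ∃ t ∈ Q, ∀ q ∈ Q, dist q t ≤ r := by
  classical
  have hfinite (u : Finset Q) : (Q ∩ ⋂ q ∈ u, closedBall (q : E) r).Nonempty := by
    rw [← set_biInter_finset_image (f := Subtype.val) (g := fun x ↦ closedBall x r)]
    have huQ : ((u.image Subtype.val : Finset E) : Set E) ⊆ Q := by simp
    rcases (u.image Subtype.val).eq_empty_or_nonempty with he | he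
    · simpa [he] using hQne
    obtain ⟨z, hz, hzb⟩ := convexHull_inter_biInter_closedBall_nonempty _ he
      fun T hT ↦ hcover T ((coe_subset.2 hT).trans huQ)
    exact ⟨z, convexHull_min huQ hQconv hz, hzb⟩
  obtain ⟨t, htQ, ht⟩ := hQ.inter_iInter_nonempty _ (fun _ ↦ isClosed_closedBall) hfinite
  exact ⟨t, htQ, fun q hq ↦ dist_comm t q ▸ mem_closedBall.1 (mem_iInter.1 ht ⟨q, hq⟩)⟩

theorem exists_dist_le_of_mem_convexHull_of_card_le {s : Finset E} {m : ℕ} (hcard : #s ≤ m + 1)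
    {d : ℝ} (hd : ∀ a ∈ s, ∀ b ∈ s, dist a b ≤ d) {y : E} (hy : y ∈ convexHull ℝ (s : Set E)) :
    ∃ x ∈ s, dist y x ≤ m / (m + 1) * d := by
  classical
  obtain ⟨w, hw0, hw1, rfl⟩ := Finset.mem_convexHull.1 hy
  have hs : s.Nonempty := nonempty_of_sum_ne_zero (hw1 ▸ one_ne_zero)
  have hm : (0 : ℝ) < m + 1 := by positivity
  obtain ⟨i, hi, hwi⟩ : ∃ i ∈ s, 1 / ((m : ℝ) + 1) ≤ w i := by
    refine exists_le_of_sum_le hs ?_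
    rw [sum_const, nsmul_eq_mul, hw1, mul_one_div, div_le_one hm]
    exact_mod_cast hcard
  refine ⟨i, hi, ?_⟩
  have hd0 : 0 ≤ d := dist_self i ▸ hd i hi i hi
  calc dist (s.centerMass w id) i
      ≤ ∑ j ∈ s, w j * dist j i := by
        simpa [smul_eq_mul, centerMass_eq_of_sum_1 _ _ hw1] using
          (convexOn_univ_dist i).map_centerMass_le hw0 (by rw [hw1]; exact one_pos)
            fun j _ ↦ mem_univ j
    _ = ∑ j ∈ s.erase i, w j * dist j i := by
        rw [← add_sum_erase s _ hi, dist_self, mul_zero, zero_add]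
    _ ≤ ∑ j ∈ s.erase i, w j * d :=
        sum_le_sum fun j hj ↦ mul_le_mul_of_nonneg_left (hd j (mem_of_mem_erase hj) i hi)
          (hw0 j (mem_of_mem_erase hj))
    _ = (1 - w i) * d := by rw [← sum_mul, sum_erase_eq_sub hi, hw1]
    _ ≤ (1 - 1 / (m + 1)) * d := by gcongr
    _ = m / (m + 1) * d := by field_simp; ring

theorem exists_dist_le_of_mem_convexHull_of_subset_affineSubspace {A : AffineSubspace ℝ E}
    [FiniteDimensional ℝ A.direction] {s : Set E} (hsA : s ⊆ A) {d : ℝ}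
    (hd : ∀ a ∈ s, ∀ b ∈ s, dist a b ≤ d) {y : E} (hy : y ∈ convexHull ℝ s) :
    ∃ x ∈ s, dist y x ≤
      Module.finrank ℝ A.direction / (Module.finrank ℝ A.direction + 1) * d := by
  rw [convexHull_eq_union] at hy
  simp only [mem_iUnion] at hy
  obtain ⟨t, hts, hindep, hyt⟩ := hy
  have hcard : #t ≤ Module.finrank ℝ A.direction + 1 := by
    have hspan : vectorSpan ℝ (Set.range ((↑) : t → E)) ≤ A.direction := by
      rw [Subtype.range_coe, AffineSubspace.direction_eq_vectorSpan]
      exact vectorSpan_mono ℝ (hts.trans hsA)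
    simpa using hindep.card_le_finrank_succ.trans
      (Nat.add_le_add_right (Submodule.finrank_mono hspan) 1)
  obtain ⟨x, hx, hyx⟩ := exists_dist_le_of_mem_convexHull_of_card_le hcard
    (fun a ha b hb ↦ hd a (hts ha) b (hts hb)) hyt
  exact ⟨x, hts hx, hyx⟩

theorem closedBall_inter_subset_vadd_smul {A : AffineSubspace ℝ E} {t : E} (ht : t ∈ A) (r : ℝ) :
    closedBall t r ∩ A ⊆ t +ᵥ r • (closedBall (0 : E) 1 ∩ A.direction) := by
  rintro q ⟨hqt, hqA⟩
  refine ⟨q - t, ?_, by simp⟩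
  have hdir : q - t ∈ A.direction := AffineSubspace.vsub_mem_direction hqA ht
  have hnorm : ‖q - t‖ ≤ r := by rwa [← dist_eq_norm]
  rcases (norm_nonneg _).trans hnorm |>.eq_or_lt with rfl | hr
  · rw [norm_le_zero_iff.1 hnorm]
    exact ⟨0, ⟨mem_closedBall_self zero_le_one, A.direction.zero_mem⟩, smul_zero _⟩
  · refine ⟨r⁻¹ • (q - t), ⟨?_, A.direction.smul_mem _ hdir⟩, smul_inv_smul₀ hr.ne' _⟩
    rw [mem_closedBall_zero_iff, norm_smul, norm_inv, Real.norm_of_nonneg hr.le]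
    exact inv_mul_le_one_of_le₀ hnorm hr.le

end Normed

theorem dist_le_two_of_mem_closedBall_one {α : Type*} [PseudoMetricSpace α] {c a b : α}
    (ha : a ∈ closedBall c 1) (hb : b ∈ closedBall c 1) : dist a b ≤ 2 := by
  simpa using (dist_le_diam_of_mem isBounded_closedBall ha hb).trans (diam_closedBall zero_le_one)

section CHD

variable (X : Type*) [NormedAddCommGroup X] [NormedSpace ℝ X]

/-- The CHD-constant `ζ_X`. -/
noncomputable def chdConstant : ℝ :=
  sSup {d : ℝ | ∃ D ⊆ closedBall (0 : X) 1, ∃ y ∈ convexHull ℝ D, d = infDist y D}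

variable {X}

theorem infDist_le_chdConstant {D : Set X} (hD : D ⊆ closedBall 0 1) {y : X}
    (hy : y ∈ convexHull ℝ D) : infDist y D ≤ chdConstant X := by
  refine le_csSup ⟨2, ?_⟩ ⟨D, hD, y, hy, rfl⟩
  rintro _ ⟨D, hD, y, hy, rfl⟩
  obtain ⟨z, hz⟩ : D.Nonempty := convexHull_nonempty_iff.1 ⟨y, hy⟩
  exact (infDist_le_dist_of_mem hz).trans <| dist_le_two_of_mem_closedBall_one
    (convexHull_min hD (convex_closedBall 0 1) hy) (hD hz)

theorem exists_dist_le_min_chdConstant {A : AffineSubspace ℝ X} [FiniteDimensional ℝ A.direction]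
    {k : ℕ} (hk : Module.finrank ℝ A.direction = k) {S : Finset X}
    (hS : ↑S ⊆ closedBall (0 : X) 1 ∩ A) {y : X} (hy : y ∈ convexHull ℝ (S : Set X)) :
    ∃ x ∈ S, dist y x ≤ min (2 * (k : ℝ) / (k + 1)) (chdConstant X) := by
  have hball : (S : Set X) ⊆ closedBall 0 1 := hS.trans inter_subset_left
  obtain ⟨x₀, hx₀, hyx₀⟩ := S.finite_toSet.isCompact.exists_infDist_eq_dist
    (convexHull_nonempty_iff.1 ⟨y, hy⟩) y
  refine ⟨x₀, hx₀, hyx₀ ▸ le_min ?_ (infDist_le_chdConstant hball hy)⟩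
  obtain ⟨x, hx, hyx⟩ := exists_dist_le_of_mem_convexHull_of_subset_affineSubspace
    (hS.trans inter_subset_right)
    (fun a ha b hb ↦ dist_le_two_of_mem_closedBall_one (hball ha) (hball hb)) hy
  calc infDist y S ≤ dist y x := infDist_le_dist_of_mem hx
    _ ≤ _ := hyx
    _ = 2 * k / (k + 1) := by rw [hk]; ring

end CHD

theorem stmt_19_general {X : Type*} [NormedAddCommGroup X] [NormedSpace ℝ X]
    [FiniteDimensional ℝ X]
    (k : ℕ) (L : Submodule ℝ X) (hL : Module.finrank ℝ L = k) (v : X)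
    (P Q : Set X)
    (hP : P = Metric.closedBall 0 1 ∩ (L : Set X))
    (hQ : Q = Metric.closedBall 0 1 ∩ (v +ᵥ (L : Set X)))
    (η : ℝ)
    (hη : η = min (2 * (k : ℝ) / ((k : ℝ) + 1))
      (sSup {d : ℝ | ∃ D ⊆ Metric.closedBall (0 : X) 1,
        ∃ y ∈ convexHull ℝ D, d = Metric.infDist y D})) :
    ∃ t : X, Q ⊆ t +ᵥ η • P := by
  set A : AffineSubspace ℝ X := v +ᵥ L.toAffineSubspace
  have hA : A.direction = L := by
    rw [AffineSubspace.pointwise_vadd_direction, Submodule.toAffineSubspace_direction]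
  replace hQ : Q = closedBall 0 1 ∩ A := hQ
  rcases Q.eq_empty_or_nonempty with rfl | hQne
  · exact ⟨0, empty_subset _⟩
  obtain ⟨t, htQ, ht⟩ := IsCompact.exists_mem_forall_dist_le_of_convexHull (r := η)
    (hQ ▸ (isCompact_closedBall 0 1).inter_right A.closed_of_finiteDimensional)
    (hQ ▸ (convex_closedBall 0 1).inter A.convex) hQne
    fun S hS y hy ↦ hη ▸ exists_dist_le_min_chdConstant (hA ▸ hL) (hQ ▸ hS) hy
  refine ⟨t, fun q hq ↦ ?_⟩
  rw [hP, ← hA]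
  exact closedBall_inter_subset_vadd_smul (hQ ▸ htQ).2 η ⟨ht q hq, (hQ ▸ hq).2⟩

theorem stmt_19 {X : Type*} [NormedAddCommGroup X] [NormedSpace ℝ X]
    [FiniteDimensional ℝ X] (n : ℕ) (hn : 2 ≤ n) (hdim : Module.finrank ℝ X = n)
    (k : ℕ) (L : Submodule ℝ X) (hL : Module.finrank ℝ L = k) (v : X)
    (P Q : Set X)
    (hP : P = Metric.closedBall 0 1 ∩ (L : Set X))
    (hQ : Q = Metric.closedBall 0 1 ∩ (v +ᵥ (L : Set X)))
    (η : ℝ)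
    (hη : η = min (2 * (k : ℝ) / ((k : ℝ) + 1))
      (sSup {d : ℝ | ∃ D ⊆ Metric.closedBall (0 : X) 1,
        ∃ y ∈ convexHull ℝ D, d = Metric.infDist y D})) :
    ∃ t : X, Q ⊆ t +ᵥ η • P :=
  stmt_19_general k L hL v P Q hP hQ η hη
end
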